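/- arXiv:1802.08023 — 10 statements merged into one kernel-verified Lean document; each statement's English description precedes it below -/
import Mathlib

section
/- Ex-post efficiency of the Trade Reduction mechanism for double auctions (McAfee): if the efficient trade size satisfies q ≥ 1, then the gains from trade obtained by trading the q−1 most efficient pairs satisfies Σ_{l=1}^{q−1}(b_l − s_l) ≥ (1 − 1/q) · Σ_{l=1}^{q}(b_l − s_l); that is, the Trade Reduction mechanism obtains at least a (1 − 1/q) fraction of the optimal (first-best) gains from trade. -/
/-! Since buyer values decrease and seller costs increase, the `q`-th pair has the smallest
gain from trade among the first `q`; dropping a smallest term of a sum of `q` terms loses at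
most their average, i.e. a `1/q` fraction of the sum. -/

open Finset

theorem Finset.one_sub_inv_card_mul_sum_le_sum_erase {ι 𝕜 : Type*} [DecidableEq ι] [Field 𝕜]
    [LinearOrder 𝕜] [IsStrictOrderedRing 𝕜] {s : Finset ι} {f : ι → 𝕜} {a : ι} (ha : a ∈ s)
    (hmin : ∀ x ∈ s, f a ≤ f x) :
    (1 - 1 / (#s : 𝕜)) * ∑ x ∈ s, f x ≤ ∑ x ∈ s.erase a, f x := by
  have hcard : (0 : 𝕜) < #s := by exact_mod_cast card_pos.mpr ⟨a, ha⟩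
  have hmean : f a ≤ (∑ x ∈ s, f x) / #s := by
    rw [le_div_iff₀ hcard, mul_comm, ← nsmul_eq_mul]
    exact card_nsmul_le_sum s f (f a) hmin
  rw [← sum_erase_add s f ha] at hmean ⊢
  rw [sub_mul, one_mul, one_div_mul_eq_div]
  linarith

theorem trade_reduction_double_auction_expost_general
    (n m q : ℕ) (b s : ℕ → ℝ)
    (hbmono : ∀ i j, 1 ≤ i → i ≤ j → j ≤ n → b j ≤ b i)
    (hsmono : ∀ i j, 1 ≤ i → i ≤ j → j ≤ m → s i ≤ s j)
    (hq1 : 1 ≤ q) (hqle : q ≤ min n m) :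
    ∑ l ∈ Finset.Icc 1 (q - 1), (b l - s l) ≥
      (1 - 1 / (q : ℝ)) * ∑ l ∈ Finset.Icc 1 q, (b l - s l) := by
  have hlast : ∀ l ∈ Icc 1 q, b q - s q ≤ b l - s l := by
    intro l hl
    obtain ⟨hl1, hlq⟩ := mem_Icc.mp hl
    have hb := hbmono l q hl1 hlq (hqle.trans (min_le_left n m))
    have hs := hsmono l q hl1 hlq (hqle.trans (min_le_right n m))
    linarith
  have hdrop : (Icc 1 q).erase q = Icc 1 (q - 1) := by
    have hq : ¬IsMin q := by rw [isMin_iff_eq_bot]; exact Nat.one_le_iff_ne_zero.mp hq1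
    rw [Icc_erase_right, ← Order.pred_eq_sub_one, Icc_pred_right_eq_Ico_of_not_isMin hq]
  have hbound := one_sub_inv_card_mul_sum_le_sum_erase (f := fun l => b l - s l)
    (right_mem_Icc.mpr hq1) hlast
  rwa [Nat.card_Icc, Nat.add_sub_cancel, hdrop] at hbound

/-- **Ex-post efficiency of the Trade Reduction mechanism for double auctions (McAfee).**
There are `n` buyers with values `b 1 ≥ b 2 ≥ ... ≥ b n` (non-increasing) and `m` sellers with
costs `s 1 ≤ s 2 ≤ ... ≤ s m` (non-decreasing), all positive. The efficient trade size `q` is the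
largest `k ≤ min n m` with `b k ≥ s k`. If `q ≥ 1`, then the gains from trade of the `q - 1` most
efficient pairs is at least a `(1 - 1/q)` fraction of the optimal gains from trade
`∑_{l=1}^{q} (b l - s l)`. -/
theorem trade_reduction_double_auction_expost
    (n m q : ℕ) (b s : ℕ → ℝ)
    (hbpos : ∀ i, 1 ≤ i → i ≤ n → 0 < b i)
    (hspos : ∀ j, 1 ≤ j → j ≤ m → 0 < s j)
    (hbmono : ∀ i j, 1 ≤ i → i ≤ j → j ≤ n → b j ≤ b i)
    (hsmono : ∀ i j, 1 ≤ i → i ≤ j → j ≤ m → s i ≤ s j)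
    (hq1 : 1 ≤ q) (hqle : q ≤ min n m)
    (hqtrade : s q ≤ b q)
    (hqmax : ∀ k, q < k → k ≤ min n m → b k < s k) :
    ∑ l ∈ Finset.Icc 1 (q - 1), (b l - s l) ≥
      (1 - 1 / (q : ℝ)) * ∑ l ∈ Finset.Icc 1 q, (b l - s l) :=
  trade_reduction_double_auction_expost_general n m q b s hbmono hsmono hq1 hqle
end

section
/- In the double-auction setting, the maximum of Σ_{(i,j)∈M}(b_i − s_j) over all matchings M of the complete bipartite graph between the n buyers and the m sellers equals Σ_{l=1}^{q}(b_l − s_l) (which is 0 when q = 0); in particular, the optimal gains from trade is attained by matching the l-th highest-value buyer to the l-th lowest-cost seller for l = 1, …, q. -/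
/-!
An arbitrary matching `M` has at most `min n m` pairs, and its buyers and sellers are
`#M`-element subsets of `{1, …, n}` and `{1, …, m}`. Among such subsets the `#M` highest
values `b 1, …, b #M` and the `#M` lowest costs `s 1, …, s #M` are extremal, so `M` gains at
most `∑_{l ≤ #M} (b l - s l)`. The summand `b l - s l` is nonnegative for `l ≤ q` and negative
for `q < l ≤ min n m`, so this partial sum is largest at `#M = q`, where the diagonal matching
`{(l, l) | 1 ≤ l ≤ q}` attains it.
-/

/-- A matching of the complete bipartite graph between buyers `1, ..., n` and sellers
`1, ..., m`: a finite set of buyer–seller pairs in which each buyer and each seller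
appears at most once. -/
def IsDAMatching (n m : ℕ) (M : Finset (ℕ × ℕ)) : Prop :=
  (∀ p ∈ M, 1 ≤ p.1 ∧ p.1 ≤ n ∧ 1 ≤ p.2 ∧ p.2 ≤ m) ∧
  (∀ p ∈ M, ∀ q ∈ M, p.1 = q.1 → p = q) ∧
  (∀ p ∈ M, ∀ q ∈ M, p.2 = q.2 → p = q)

open Finset

section Exchange

variable {N : Type*} [AddCommMonoid N] [PartialOrder N] [IsOrderedAddMonoid N]

/-- Exchange argument: every element of `I \ Icc 1 #I` lies above `#I`, every element of
`Icc 1 #I \ I` below, and the two differences have the same size. -/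
theorem Finset.sum_le_sum_Icc_one_card_of_antitoneOn {n : ℕ} {f : ℕ → N}
    (hf : AntitoneOn f (Set.Icc 1 n)) {I : Finset ℕ} (hI : I ⊆ Icc 1 n) :
    ∑ i ∈ I, f i ≤ ∑ l ∈ Icc 1 #I, f l := by
  obtain hI0 | hk := Nat.eq_zero_or_pos #I
  · simp [card_eq_zero.mp hI0]
  have hkn : #I ≤ n := by simpa using card_le_card hI
  have hcard : #(I \ Icc 1 #I) = #(Icc 1 #I \ I) :=
    le_antisymm (card_sdiff_le_card_sdiff_iff.mpr (by simp))
      (card_sdiff_le_card_sdiff_iff.mpr (by simp))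
  have hpivot : (#I : ℕ) ∈ Set.Icc 1 n := ⟨hk, hkn⟩
  have hout : ∑ i ∈ I \ Icc 1 #I, f i ≤ ∑ l ∈ Icc 1 #I \ I, f l := by
    calc ∑ i ∈ I \ Icc 1 #I, f i
        ≤ #(I \ Icc 1 #I) • f #I := by
          refine sum_le_card_nsmul _ _ _ fun i hi => ?_
          obtain ⟨hiI, hik⟩ := mem_sdiff.mp hi
          have hi' := mem_Icc.mp (hI hiI)
          exact hf hpivot hi' (by simp only [mem_Icc] at hik; omega)
      _ = #(Icc 1 #I \ I) • f #I := by rw [hcard]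
      _ ≤ ∑ l ∈ Icc 1 #I \ I, f l := by
          refine card_nsmul_le_sum _ _ _ fun l hl => ?_
          have hl' := mem_Icc.mp (mem_sdiff.mp hl).1
          exact hf ⟨hl'.1, hl'.2.trans hkn⟩ hpivot hl'.2
  rw [← sum_inter_add_sum_sdiff I (Icc 1 #I), ← sum_inter_add_sum_sdiff (Icc 1 #I) I,
    inter_comm]
  exact add_le_add_right hout _

theorem Finset.sum_Icc_one_card_le_sum_of_monotoneOn {n : ℕ} {f : ℕ → N}
    (hf : MonotoneOn f (Set.Icc 1 n)) {I : Finset ℕ} (hI : I ⊆ Icc 1 n) :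
    ∑ l ∈ Icc 1 #I, f l ≤ ∑ i ∈ I, f i :=
  sum_le_sum_Icc_one_card_of_antitoneOn (N := Nᵒᵈ) hf.dual_right hI

theorem Finset.sum_Icc_one_le_sum_Icc_one_of_sign_change {q r k : ℕ} {f : ℕ → N}
    (hnonneg : ∀ l ∈ Icc 1 q, 0 ≤ f l) (hnonpos : ∀ l, q < l → l ≤ r → f l ≤ 0)
    (hk : k ≤ r) :
    ∑ l ∈ Icc 1 k, f l ≤ ∑ l ∈ Icc 1 q, f l := by
  obtain hkq | hqk := le_total k q
  · exact sum_le_sum_of_subset_of_nonneg (Icc_subset_Icc_right hkq)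
      fun l hl _ => hnonneg l hl
  · refine sum_le_sum_of_subset_of_nonpos' (Icc_subset_Icc_right hqk) fun l hl hlq => ?_
    simp only [mem_Icc] at hl hlq
    exact hnonpos l (by omega) (hl.2.trans hk)

end Exchange

namespace IsDAMatching

variable {n m : ℕ} {M : Finset (ℕ × ℕ)}

theorem image_fst_subset (hM : IsDAMatching n m M) : M.image Prod.fst ⊆ Icc 1 n := by
  intro i hi
  obtain ⟨p, hp, rfl⟩ := mem_image.mp hi
  exact mem_Icc.mpr ⟨(hM.1 p hp).1, (hM.1 p hp).2.1⟩

theorem image_snd_subset (hM : IsDAMatching n m M) : M.image Prod.snd ⊆ Icc 1 m := by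
  intro j hj
  obtain ⟨p, hp, rfl⟩ := mem_image.mp hj
  exact mem_Icc.mpr ⟨(hM.1 p hp).2.2.1, (hM.1 p hp).2.2.2⟩

theorem card_image_fst (hM : IsDAMatching n m M) : #(M.image Prod.fst) = #M :=
  card_image_of_injOn hM.2.1

theorem card_image_snd (hM : IsDAMatching n m M) : #(M.image Prod.snd) = #M :=
  card_image_of_injOn hM.2.2

theorem card_le_min (hM : IsDAMatching n m M) : #M ≤ min n m := by
  have hn := card_le_card hM.image_fst_subset
  have hm := card_le_card hM.image_snd_subset
  simp only [hM.card_image_fst, hM.card_image_snd, Nat.card_Icc, add_tsub_cancel_right] at hn hm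
  exact le_min hn hm

theorem sum_le_sum_Icc_one_card (hM : IsDAMatching n m M) {b s : ℕ → ℝ}
    (hb : AntitoneOn b (Set.Icc 1 n)) (hs : MonotoneOn s (Set.Icc 1 m)) :
    ∑ p ∈ M, (b p.1 - s p.2) ≤ ∑ l ∈ Icc 1 #M, (b l - s l) := by
  have hbuyers : ∑ p ∈ M, b p.1 ≤ ∑ l ∈ Icc 1 #M, b l := by
    rw [← sum_image hM.2.1, ← hM.card_image_fst]
    exact sum_le_sum_Icc_one_card_of_antitoneOn hb hM.image_fst_subset
  have hsellers : ∑ l ∈ Icc 1 #M, s l ≤ ∑ p ∈ M, s p.2 := by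
    rw [← sum_image hM.2.2, ← hM.card_image_snd]
    exact sum_Icc_one_card_le_sum_of_monotoneOn hs hM.image_snd_subset
  simp only [sum_sub_distrib]
  linarith

end IsDAMatching

theorem isDAMatching_diag_Icc {n m q : ℕ} (hq : q ≤ min n m) :
    IsDAMatching n m (Icc 1 q).diag := by
  simp only [IsDAMatching, mem_diag, mem_Icc, le_min_iff, Prod.forall, Prod.mk.injEq] at hq ⊢
  grind

theorem double_auction_first_best_general
    (n m q : ℕ) (b s : ℕ → ℝ)
    (hbmono : ∀ i j, 1 ≤ i → i ≤ j → j ≤ n → b j ≤ b i)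
    (hsmono : ∀ i j, 1 ≤ i → i ≤ j → j ≤ m → s i ≤ s j)
    (hqle : q ≤ min n m)
    (hqtrade : 1 ≤ q → s q ≤ b q)
    (hqmax : ∀ k, q < k → k ≤ min n m → b k < s k) :
    IsGreatest
      {x : ℝ | ∃ M : Finset (ℕ × ℕ), IsDAMatching n m M ∧ x = ∑ p ∈ M, (b p.1 - s p.2)}
      (∑ l ∈ Finset.Icc 1 q, (b l - s l)) := by
  have hb : AntitoneOn b (Set.Icc 1 n) := fun i hi j hj hij => hbmono i j hi.1 hij hj.2
  have hs : MonotoneOn s (Set.Icc 1 m) := fun i hi j hj hij => hsmono i j hi.1 hij hj.2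
  have hgain : ∀ l ∈ Icc 1 q, 0 ≤ b l - s l := by
    intro l hl
    obtain ⟨h1, hlq⟩ := mem_Icc.mp hl
    have hq := le_min_iff.mp hqle
    have := hqtrade (h1.trans hlq)
    linarith [hbmono l q h1 hlq hq.1, hsmono l q h1 hlq hq.2]
  refine ⟨⟨(Icc 1 q).diag, isDAMatching_diag_Icc hqle, by simp⟩, ?_⟩
  rintro _ ⟨M, hM, rfl⟩
  calc ∑ p ∈ M, (b p.1 - s p.2) ≤ ∑ l ∈ Icc 1 #M, (b l - s l) :=
        hM.sum_le_sum_Icc_one_card hb hs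
    _ ≤ ∑ l ∈ Icc 1 q, (b l - s l) :=
        sum_Icc_one_le_sum_Icc_one_of_sign_change hgain
          (fun l hql hlr => sub_nonpos.mpr (hqmax l hql hlr).le) hM.card_le_min

/-- **The first-best gains from trade in a double auction.**
With buyer values `b 1 ≥ ... ≥ b n` (non-increasing) and seller costs `s 1 ≤ ... ≤ s m`
(non-decreasing), all positive, and with efficient trade size `q` (the largest `k ≤ min n m`
with `b k ≥ s k`, and `q = 0` if none exists), the maximum of `∑_{(i,j) ∈ M} (b i - s j)`
over all matchings `M` of the complete bipartite graph equals `∑_{l=1}^{q} (b l - s l)`. -/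
theorem double_auction_first_best
    (n m q : ℕ) (b s : ℕ → ℝ)
    (hbpos : ∀ i, 1 ≤ i → i ≤ n → 0 < b i)
    (hspos : ∀ j, 1 ≤ j → j ≤ m → 0 < s j)
    (hbmono : ∀ i j, 1 ≤ i → i ≤ j → j ≤ n → b j ≤ b i)
    (hsmono : ∀ i j, 1 ≤ i → i ≤ j → j ≤ m → s i ≤ s j)
    (hqle : q ≤ min n m)
    (hqtrade : 1 ≤ q → s q ≤ b q)
    (hqmax : ∀ k, q < k → k ≤ min n m → b k < s k) :
    IsGreatest
      {x : ℝ | ∃ M : Finset (ℕ × ℕ), IsDAMatching n m M ∧ x = ∑ p ∈ M, (b p.1 - s p.2)}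
      (∑ l ∈ Finset.Icc 1 q, (b l - s l)) :=
  double_auction_first_best_general n m q b s hbmono hsmono hqle hqtrade hqmax
end

section
/- Ex-post efficiency guarantee of the Trade Reduction mechanism for matching markets: let M be a nonempty maximum-weight matching of the matching market G with weight OPT. Define the Trade Reduction gains from trade as GFT_TR = Σ over buyer classes t with q_t > 0 of (the sum of the q_t − d_t largest values among all class-t buyers) minus Σ over seller classes t with q_t > 0 of (the sum of the q_t − d_t smallest costs among all class-t sellers). Then GFT_TR ≥ α · OPT, where α = min{ 1 − d_t/q_t : t a class with q_t > 0 }. -/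
/-!
Because `M` has maximum weight, an alternating path of matched edges `e = ℓ 0, …, ℓ k = f`
(the buyer of each `ℓ i` adjacent to the seller of `ℓ (i + 1)`) never has `s e.2 > b f.1`:
shifting `M` along a shortest such path would gain `s e.2 - b f.1`. So pricing each matched edge
at the largest cost of a seller from which an alternating path reaches it gives prices between cost
and value that are monotone along edges of `G`, hence constant on each buyer and each seller class.

This splits `OPT` into buyer surpluses `b - π` and seller surpluses `π - s`. In a class `t`,
dropping the `d_t` trades of smallest surplus loses at most the fraction `d_t / q_t ≤ 1 - α` of
the class surplus, and the `q_t - d_t` remaining agents are bounded by the top (bottom) sums.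
The prices of the dropped trades cancel: summed over buyer classes and over seller classes,
`Σ d_t π_t` both count each pair of classes joined by `M` once, at its common price.
-/

open Finset

/-- A matching of the bipartite graph with buyer vertices `B`, seller vertices `S` and
edge relation `E`: a finite set of edges (buyer–seller pairs) that are pairwise
vertex-disjoint. -/
def IsMatchingOn {B S : Type*} (E : B → S → Prop) (M : Finset (B × S)) : Prop :=
  (∀ p ∈ M, E p.1 p.2) ∧
  (∀ p ∈ M, ∀ q ∈ M, p.1 = q.1 → p = q) ∧
  (∀ p ∈ M, ∀ q ∈ M, p.2 = q.2 → p = q)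

/-- The weight (gains from trade) of a matching: `∑_{(i,j) ∈ M} (b i - s j)`. -/
noncomputable def matchWeight {B S : Type*} (b : B → ℝ) (s : S → ℝ)
    (M : Finset (B × S)) : ℝ :=
  ∑ p ∈ M, (b p.1 - s p.2)

/-- The sum of the `k` largest elements of a finite multiset of reals. -/
noncomputable def topSum (m : Multiset ℝ) (k : ℕ) : ℝ :=
  (((m.sort (· ≤ ·)).reverse).take k).sum

/-- The sum of the `k` smallest elements of a finite multiset of reals. -/
noncomputable def botSum (m : Multiset ℝ) (k : ℕ) : ℝ :=
  ((m.sort (· ≤ ·)).take k).sum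

theorem List.Pairwise.sum_take_card_le_sum {α : Type*} [AddCommMonoid α] [PartialOrder α]
    [IsOrderedAddMonoid α] {l : List α} (hl : l.Pairwise (· ≤ ·)) {u : Multiset α}
    (hu : u ≤ ↑l) : (l.take (Multiset.card u)).sum ≤ u.sum := by
  classical
  induction l generalizing u with
  | nil => simp [Multiset.le_zero.mp hu]
  | cons x t ih =>
    rcases Multiset.empty_or_exists_mem u with rfl | ⟨z, hz⟩
    · simp
    obtain ⟨y, hy, hxy, hyt⟩ : ∃ y ∈ u, x ≤ y ∧ u.erase y ≤ ↑t := by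
      by_cases hx : x ∈ u
      · exact ⟨x, hx, le_rfl, by simpa using Multiset.erase_le_erase x hu⟩
      · have hut : u ≤ ↑t := (Multiset.le_cons_of_notMem hx).mp (by simpa using hu)
        exact ⟨z, hz, List.rel_of_pairwise_cons hl (Multiset.mem_of_le hut hz),
          (Multiset.erase_le z u).trans hut⟩
    rw [← Multiset.cons_erase hy, Multiset.card_cons, List.take_succ_cons, List.sum_cons,
      Multiset.sum_cons]
    exact add_le_add hxy (ih hl.of_cons hyt)

theorem botSum_le_sum {m u : Multiset ℝ} (h : u ≤ m) : botSum m (Multiset.card u) ≤ u.sum :=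
  (m.pairwise_sort (· ≤ ·)).sum_take_card_le_sum (by rwa [Multiset.sort_eq])

theorem sum_le_topSum {m u : Multiset ℝ} (h : u ≤ m) :
    u.sum ≤ topSum m (Multiset.card u) := by
  have hu : u ≤ ↑(m.sort (· ≤ ·)).reverse := by rwa [Multiset.coe_reverse, Multiset.sort_eq]
  -- the decreasing list is increasing for the dual order
  exact List.Pairwise.sum_take_card_le_sum (α := ℝᵒᵈ)
    (List.pairwise_reverse.mpr (m.pairwise_sort (· ≤ ·))) hu

theorem botSum_map_le_sum {β : Type*} (v : β → ℝ) {U T : Finset β} (h : U ⊆ T) :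
    botSum (T.val.map v) #U ≤ ∑ x ∈ U, v x := by
  simpa using botSum_le_sum (Multiset.map_le_map (f := v) (Finset.val_le_iff.mpr h))

theorem sum_le_topSum_map {β : Type*} (v : β → ℝ) {U T : Finset β} (h : U ⊆ T) :
    ∑ x ∈ U, v x ≤ topSum (T.val.map v) #U := by
  simpa using sum_le_topSum (Multiset.map_le_map (f := v) (Finset.val_le_iff.mpr h))

theorem Finset.exists_subset_card_eq_forall_le {α β : Type*} [DecidableEq α] [LinearOrder β]
    (f : α → β) {A : Finset α} {d : ℕ} (hd : d ≤ #A) :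
    ∃ C ⊆ A, #C = d ∧ ∀ x ∈ C, ∀ y ∈ A \ C, f x ≤ f y := by
  induction d with
  | zero => exact ⟨∅, empty_subset _, rfl, by simp⟩
  | succ d ih =>
    obtain ⟨C, hCA, hCd, hC⟩ := ih (by omega)
    have hne : (A \ C).Nonempty := by
      rw [← card_pos, card_sdiff_of_subset hCA]; omega
    obtain ⟨a, ha, hmin⟩ := (A \ C).exists_min_image f hne
    refine ⟨insert a C, insert_subset (mem_sdiff.mp ha).1 hCA, ?_, ?_⟩
    · rw [card_insert_of_notMem (mem_sdiff.mp ha).2, hCd]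
    · intro x hx y hy
      have hy' : y ∈ A \ C := by
        simp only [mem_sdiff, mem_insert, not_or] at hy ⊢
        exact ⟨hy.1, hy.2.2⟩
      rcases mem_insert.mp hx with rfl | hx
      · exact hmin y hy'
      · exact hC x hx y hy'

theorem card_mul_sum_le_card_mul_sum {α : Type*} [DecidableEq α] {f : α → ℝ}
    {C A : Finset α} (hCA : C ⊆ A) (h : ∀ x ∈ C, ∀ y ∈ A \ C, f x ≤ f y) :
    #A * ∑ x ∈ C, f x ≤ #C * ∑ x ∈ A, f x := by
  have key : ∑ x ∈ C, ∑ _y ∈ A \ C, f x ≤ ∑ _x ∈ C, ∑ y ∈ A \ C, f y :=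
    sum_le_sum fun x hx => sum_le_sum fun y hy => h x hx y hy
  simp only [sum_const, nsmul_eq_mul, ← mul_sum] at key
  rw [← sum_sdiff hCA, ← card_sdiff_add_card_eq_card hCA]
  push_cast
  linarith

theorem exists_subset_card_eq_sum_le_mul {α : Type*} [DecidableEq α] (y : α → ℝ)
    {A : Finset α} (hy : ∀ x ∈ A, 0 ≤ y x) {d : ℕ} {c : ℝ} (hdA : d ≤ #A)
    (hdc : d ≤ c * #A) :
    ∃ C ⊆ A, #C = d ∧ ∑ x ∈ C, y x ≤ c * ∑ x ∈ A, y x := by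
  obtain ⟨C, hCA, rfl, hC⟩ := A.exists_subset_card_eq_forall_le y hdA
  refine ⟨C, hCA, rfl, ?_⟩
  rcases A.eq_empty_or_nonempty with rfl | hA
  · simp [subset_empty.mp hCA]
  refine le_of_mul_le_mul_left ?_ (show (0 : ℝ) < #A by exact_mod_cast hA.card_pos)
  calc (#A : ℝ) * ∑ x ∈ C, y x ≤ #C * ∑ x ∈ A, y x :=
        card_mul_sum_le_card_mul_sum hCA hC
    _ ≤ c * #A * ∑ x ∈ A, y x := mul_le_mul_of_nonneg_right hdc (sum_nonneg hy)
    _ = #A * (c * ∑ x ∈ A, y x) := by ring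

theorem le_topSum_card_sub {β : Type*} [DecidableEq β] (v : β → ℝ) {U T : Finset β}
    (hUT : U ⊆ T) {p : ℝ} (hp : ∀ x ∈ U, p ≤ v x) {d : ℕ} {c : ℝ} (hdU : d ≤ #U)
    (hdc : d ≤ c * #U) :
    ∑ x ∈ U, v x - d * p - c * ∑ x ∈ U, (v x - p) ≤ topSum (T.val.map v) (#U - d) := by
  obtain ⟨C, hCU, hCd, hC⟩ := exists_subset_card_eq_sum_le_mul (fun x => v x - p)
    (fun x hx => sub_nonneg.mpr (hp x hx)) hdU hdc
  have htop := sum_le_topSum_map v ((sdiff_subset (t := C)).trans hUT)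
  rw [card_sdiff_of_subset hCU, hCd] at htop
  have hsplit := sum_sdiff hCU (f := v)
  have hCp : ∑ x ∈ C, (v x - p) = ∑ x ∈ C, v x - d * p := by
    rw [sum_sub_distrib, sum_const, hCd, nsmul_eq_mul]
  linarith

theorem botSum_card_sub_le {β : Type*} [DecidableEq β] (v : β → ℝ) {U T : Finset β}
    (hUT : U ⊆ T) {p : ℝ} (hp : ∀ x ∈ U, v x ≤ p) {d : ℕ} {c : ℝ} (hdU : d ≤ #U)
    (hdc : d ≤ c * #U) :
    botSum (T.val.map v) (#U - d) ≤ ∑ x ∈ U, v x - d * p + c * ∑ x ∈ U, (p - v x) := by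
  obtain ⟨C, hCU, hCd, hC⟩ := exists_subset_card_eq_sum_le_mul (fun x => p - v x)
    (fun x hx => sub_nonneg.mpr (hp x hx)) hdU hdc
  have hbot := botSum_map_le_sum v ((sdiff_subset (t := C)).trans hUT)
  rw [card_sdiff_of_subset hCU, hCd] at hbot
  have hsplit := sum_sdiff hCU (f := v)
  have hCp : ∑ x ∈ C, (p - v x) = d * p - ∑ x ∈ C, v x := by
    rw [sum_sub_distrib, sum_const, hCd, nsmul_eq_mul]
  linarith

theorem sum_sub_le_sum_topSum {B S ι : Type*} [Fintype B] [DecidableEq ι] {b : B → ℝ}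
    {cB : B → ι} {M : Finset (B × S)} (hM : Set.InjOn Prod.fst (M : Set (B × S)))
    {g : ι → ℝ} (hg : ∀ e ∈ M, g (cB e.1) ≤ b e.1) {d : ι → ℕ} {c : ℝ}
    (hdq : ∀ t, d t ≤ #(M.filter fun p => cB p.1 = t))
    (hdc : ∀ t, (d t : ℝ) ≤ c * #(M.filter fun p => cB p.1 = t)) :
    ∑ e ∈ M, b e.1 - ∑ t ∈ M.image (fun e => cB e.1), d t * g t
        - c * ∑ e ∈ M, (b e.1 - g (cB e.1)) ≤
      ∑ t ∈ M.image (fun e => cB e.1),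
        topSum ((univ.filter fun i => cB i = t).val.map b)
          (#(M.filter fun p => cB p.1 = t) - d t) := by
  classical
  have hclass : ∀ t, ∑ e ∈ M.filter (fun p => cB p.1 = t), b e.1 - d t * g t
      - c * ∑ e ∈ M.filter (fun p => cB p.1 = t), (b e.1 - g (cB e.1)) ≤
      topSum ((univ.filter fun i => cB i = t).val.map b)
        (#(M.filter fun p => cB p.1 = t) - d t) := by
    intro t
    have hinj : Set.InjOn Prod.fst ↑(M.filter fun p => cB p.1 = t) :=
      hM.mono (coe_subset.mpr (filter_subset _ _))
    have hct : ∀ e ∈ M.filter (fun p => cB p.1 = t), cB e.1 = t :=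
      fun e he => (mem_filter.mp he).2
    have h := le_topSum_card_sub b (U := (M.filter fun p => cB p.1 = t).image Prod.fst)
      (T := univ.filter fun i => cB i = t) (p := g t) (d := d t) (c := c)
      (by intro i hi; obtain ⟨e, he, rfl⟩ := mem_image.mp hi; simp [hct e he])
      (by intro i hi; obtain ⟨e, he, rfl⟩ := mem_image.mp hi
          simpa [hct e he] using hg e (mem_filter.mp he).1)
      (by rw [card_image_of_injOn hinj]; exact hdq t)
      (by rw [card_image_of_injOn hinj]; exact hdc t)
    rw [card_image_of_injOn hinj, sum_image hinj, sum_image hinj] at h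
    have hgt : ∑ e ∈ M.filter (fun p => cB p.1 = t), (b e.1 - g (cB e.1)) =
        ∑ e ∈ M.filter (fun p => cB p.1 = t), (b e.1 - g t) :=
      sum_congr rfl fun e he => by rw [hct e he]
    rwa [hgt]
  have hmaps : ∀ e ∈ M, cB e.1 ∈ M.image (fun e => cB e.1) := fun _ => mem_image_of_mem _
  calc _ = ∑ t ∈ M.image (fun e => cB e.1), (∑ e ∈ M.filter (fun p => cB p.1 = t), b e.1
        - d t * g t - c * ∑ e ∈ M.filter (fun p => cB p.1 = t), (b e.1 - g (cB e.1))) := by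
        simp only [sum_sub_distrib, ← mul_sum, sum_fiberwise_of_maps_to hmaps]
    _ ≤ _ := sum_le_sum fun t _ => hclass t

theorem sum_botSum_le_sum_add {B S κ : Type*} [Fintype S] [DecidableEq κ] {s : S → ℝ}
    {cS : S → κ} {M : Finset (B × S)} (hM : Set.InjOn Prod.snd (M : Set (B × S)))
    {g : κ → ℝ} (hg : ∀ e ∈ M, s e.2 ≤ g (cS e.2)) {d : κ → ℕ} {c : ℝ}
    (hdq : ∀ u, d u ≤ #(M.filter fun p => cS p.2 = u))
    (hdc : ∀ u, (d u : ℝ) ≤ c * #(M.filter fun p => cS p.2 = u)) :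
    ∑ u ∈ M.image (fun e => cS e.2),
        botSum ((univ.filter fun j => cS j = u).val.map s)
          (#(M.filter fun p => cS p.2 = u) - d u) ≤
      ∑ e ∈ M, s e.2 - ∑ u ∈ M.image (fun e => cS e.2), d u * g u
        + c * ∑ e ∈ M, (g (cS e.2) - s e.2) := by
  classical
  have hclass : ∀ u, botSum ((univ.filter fun j => cS j = u).val.map s)
      (#(M.filter fun p => cS p.2 = u) - d u) ≤
      ∑ e ∈ M.filter (fun p => cS p.2 = u), s e.2 - d u * g u
        + c * ∑ e ∈ M.filter (fun p => cS p.2 = u), (g (cS e.2) - s e.2) := by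
    intro u
    have hinj : Set.InjOn Prod.snd ↑(M.filter fun p => cS p.2 = u) :=
      hM.mono (coe_subset.mpr (filter_subset _ _))
    have hcu : ∀ e ∈ M.filter (fun p => cS p.2 = u), cS e.2 = u :=
      fun e he => (mem_filter.mp he).2
    have h := botSum_card_sub_le s (U := (M.filter fun p => cS p.2 = u).image Prod.snd)
      (T := univ.filter fun j => cS j = u) (p := g u) (d := d u) (c := c)
      (by intro j hj; obtain ⟨e, he, rfl⟩ := mem_image.mp hj; simp [hcu e he])
      (by intro j hj; obtain ⟨e, he, rfl⟩ := mem_image.mp hj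
          simpa [hcu e he] using hg e (mem_filter.mp he).1)
      (by rw [card_image_of_injOn hinj]; exact hdq u)
      (by rw [card_image_of_injOn hinj]; exact hdc u)
    rw [card_image_of_injOn hinj, sum_image hinj, sum_image hinj] at h
    have hgu : ∑ e ∈ M.filter (fun p => cS p.2 = u), (g (cS e.2) - s e.2) =
        ∑ e ∈ M.filter (fun p => cS p.2 = u), (g u - s e.2) :=
      sum_congr rfl fun e he => by rw [hcu e he]
    rwa [hgu]
  have hmaps : ∀ e ∈ M, cS e.2 ∈ M.image (fun e => cS e.2) := fun _ => mem_image_of_mem _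
  calc _ ≤ ∑ u ∈ M.image (fun e => cS e.2), (∑ e ∈ M.filter (fun p => cS p.2 = u), s e.2
        - d u * g u + c * ∑ e ∈ M.filter (fun p => cS p.2 = u), (g (cS e.2) - s e.2)) :=
        sum_le_sum fun u _ => hclass u
    _ = _ := by
        simp only [sum_add_distrib, sum_sub_distrib, ← mul_sum, sum_fiberwise_of_maps_to hmaps]

theorem sum_card_image_mul_eq {α γ δ : Type*} [DecidableEq γ] [DecidableEq δ] (M : Finset α)
    (c : α → γ) (c' : α → δ) {g : γ → ℝ} {g' : δ → ℝ}
    (h : ∀ e ∈ M, g (c e) = g' (c' e)) :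
    ∑ t ∈ M.image c, #((M.filter fun e => c e = t).image c') * g t =
      ∑ u ∈ M.image c', #((M.filter fun e => c' e = u).image c) * g' u := by
  set P := M.image fun e => (c e, c' e)
  have hl : ∑ p ∈ P, g p.1 =
      ∑ t ∈ M.image c, #((M.filter fun e => c e = t).image c') * g t := by
    rw [sum_finset_product P (M.image c) fun t => (M.filter fun e => c e = t).image c']
    · simp [sum_const]
    · rintro ⟨t, u⟩
      simp only [P, mem_image, mem_filter, Prod.mk.injEq]
      constructor
      · rintro ⟨e, he, rfl, rfl⟩; exact ⟨⟨e, he, rfl⟩, e, ⟨he, rfl⟩, rfl⟩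
      · rintro ⟨-, e, ⟨he, rfl⟩, rfl⟩; exact ⟨e, he, rfl, rfl⟩
  have hr : ∑ p ∈ P, g' p.2 =
      ∑ u ∈ M.image c', #((M.filter fun e => c' e = u).image c) * g' u := by
    rw [sum_finset_product_right P (M.image c') fun u => (M.filter fun e => c' e = u).image c]
    · simp [sum_const]
    · rintro ⟨t, u⟩
      simp only [P, mem_image, mem_filter, Prod.mk.injEq]
      constructor
      · rintro ⟨e, he, rfl, rfl⟩; exact ⟨⟨e, he, rfl⟩, e, ⟨he, rfl⟩, rfl⟩
      · rintro ⟨-, e, ⟨he, rfl⟩, rfl⟩; exact ⟨e, he, rfl, rfl⟩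
  rw [← hl, ← hr]
  refine sum_congr rfl fun p hp => ?_
  obtain ⟨e, he, rfl⟩ := mem_image.mp hp
  exact h e he

theorem exists_eq_comp_of_forall_eq {α γ : Type*} {M : Finset α} {c : α → γ} {f : α → ℝ}
    (h : ∀ e ∈ M, ∀ e' ∈ M, c e = c e' → f e = f e') :
    ∃ g : γ → ℝ, ∀ e ∈ M, f e = g (c e) := by
  classical
  refine ⟨fun t => if ht : ∃ e ∈ M, c e = t then f ht.choose else 0, fun e he => ?_⟩
  have hex : ∃ e' ∈ M, c e' = c e := ⟨e, he, rfl⟩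
  simp only [dif_pos hex]
  exact h e he _ hex.choose_spec.1 hex.choose_spec.2.symm

theorem filter_card_filter_pos_eq_image {α γ : Type*} [Fintype γ] [DecidableEq γ]
    (M : Finset α) (c : α → γ) :
    univ.filter (fun t => 0 < #(M.filter fun e => c e = t)) = M.image c := by
  ext t
  simp [card_pos, Finset.Nonempty, eq_comm]

theorem natCast_le_one_sub_mul {a : ℝ} {d q : ℕ} (hdq : d ≤ q)
    (h : 0 < q → a ≤ 1 - d / q) :
    (d : ℝ) ≤ (1 - a) * q := by
  rcases Nat.eq_zero_or_pos q with rfl | hq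
  · simp [Nat.le_zero.mp hdq]
  have hq' : (0 : ℝ) < q := by exact_mod_cast hq
  calc (d : ℝ) = d / q * q := by field_simp
    _ ≤ (1 - a) * q := by gcongr; linarith [h hq]

section Chains

variable {α : Type*} {r : α → α → Prop} {a b : α}

theorem exists_chain_of_reflTransGen (h : Relation.ReflTransGen r a b) :
    ∃ (k : ℕ) (ℓ : ℕ → α), ℓ 0 = a ∧ ℓ k = b ∧
      ∀ i < k, r (ℓ i) (ℓ (i + 1)) := by
  induction h with
  | refl => exact ⟨0, fun _ => a, rfl, rfl, by simp⟩
  | @tail c d _ hcd ih =>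
    obtain ⟨k, ℓ, h0, hk, hr⟩ := ih
    refine ⟨k + 1, fun i => if i ≤ k then ℓ i else d, by simpa using h0, by simp,
      fun i hi => ?_⟩
    rcases Nat.lt_or_eq_of_le (Nat.lt_succ_iff.mp hi) with hi | rfl
    · simpa [hi.le, Nat.succ_le_of_lt hi] using hr i hi
    · simpa [hk] using hcd

theorem exists_injOn_chain_of_reflTransGen (h : Relation.ReflTransGen r a b) :
    ∃ (k : ℕ) (ℓ : ℕ → α), ℓ 0 = a ∧ ℓ k = b ∧
      (∀ i < k, r (ℓ i) (ℓ (i + 1))) ∧ Set.InjOn ℓ (Set.Iic k) := by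
  obtain ⟨k, hk⟩ := exists_chain_of_reflTransGen h
  induction k using Nat.strong_induction_on with
  | _ k ih =>
  obtain ⟨ℓ, h0, hk, hr⟩ := hk
  by_cases hinj : Set.InjOn ℓ (Set.Iic k)
  · exact ⟨k, ℓ, h0, hk, hr, hinj⟩
  obtain ⟨i, j, hij, hj, hℓ⟩ : ∃ i j, i < j ∧ j ≤ k ∧ ℓ i = ℓ j := by
    simp only [Set.InjOn, Set.mem_Iic, not_forall] at hinj
    obtain ⟨i, hi, j, hj, hℓ, hne⟩ := hinj
    rcases Nat.lt_or_gt_of_ne hne with h | h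
    · exact ⟨i, j, h, hj, hℓ⟩
    · exact ⟨j, i, h, hi, hℓ.symm⟩
  -- cut out the loop `ℓ i, …, ℓ j`
  refine ih (k - (j - i)) (by omega)
    ⟨fun n => ℓ (if n ≤ i then n else n + (j - i)), by simpa using h0, ?_, fun n hn => ?_⟩
  · dsimp only
    split_ifs with h
    · rw [show k - (j - i) = i by omega, hℓ, show j = k by omega, hk]
    · rw [show k - (j - i) + (j - i) = k by omega, hk]
  · dsimp only
    split_ifs with h₁ h₂ h₂
    · exact hr n (by omega)
    · obtain rfl : n = i := by omega
      rw [hℓ, show n + 1 + (j - n) = j + 1 by omega]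
      exact hr j (by omega)
    · omega
    · rw [show n + 1 + (j - i) = n + (j - i) + 1 by omega]
      exact hr _ (by omega)

end Chains

theorem Set.InjOn.sdiff_union {α β : Type*} {f : α → β} {M I R : Set α} (hM : Set.InjOn f M)
    (hI : I ⊆ M) (hR : Set.InjOn f R) (hRI : f '' R ⊆ f '' I) : Set.InjOn f (M \ I ∪ R) := by
  have key : ∀ x ∈ M \ I, ∀ y ∈ R, f x ≠ f y := by
    rintro x ⟨hxM, hxI⟩ y hy hxy
    obtain ⟨z, hz, hzy⟩ := hRI ⟨y, hy, rfl⟩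
    exact hxI (hM hxM (hI hz) (hxy.trans hzy.symm) ▸ hz)
  rintro x (hx | hx) y (hy | hy) hxy
  · exact hM hx.1 hy.1 hxy
  · exact absurd hxy (key x hx y hy)
  · exact absurd hxy.symm (key y hy x hx)
  · exact hR hx hy hxy

section Matching

variable {B S : Type*} {E : B → S → Prop} {M : Finset (B × S)}

theorem IsMatchingOn.injOn_fst (hM : IsMatchingOn E M) : Set.InjOn Prod.fst (M : Set (B × S)) :=
  fun _ hp _ hq => hM.2.1 _ hp _ hq

theorem IsMatchingOn.injOn_snd (hM : IsMatchingOn E M) : Set.InjOn Prod.snd (M : Set (B × S)) :=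
  fun _ hp _ hq => hM.2.2 _ hp _ hq

variable [DecidableEq B] [DecidableEq S]

/-- Shifting `M` along the alternating path `ℓ 0, …, ℓ k`; the buyer of `ℓ k` and the seller
of `ℓ 0` end up unmatched. -/
def shiftAlong (M : Finset (B × S)) (ℓ : ℕ → B × S) (k : ℕ) : Finset (B × S) :=
  (M \ (range (k + 1)).image ℓ) ∪ (range k).image fun i => ((ℓ i).1, (ℓ (i + 1)).2)

variable {ℓ : ℕ → B × S} {k : ℕ}

theorem image_range_succ_subset (hℓM : ∀ i ≤ k, ℓ i ∈ M) :
    (range (k + 1)).image ℓ ⊆ M := by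
  intro p hp
  obtain ⟨i, hi, rfl⟩ := mem_image.mp hp
  exact hℓM i (by simp at hi; omega)

theorem isMatchingOn_shiftAlong (hM : IsMatchingOn E M) (hℓM : ∀ i ≤ k, ℓ i ∈ M)
    (hℓE : ∀ i < k, E (ℓ i).1 (ℓ (i + 1)).2) (hinj : Set.InjOn ℓ (Set.Iic k)) :
    IsMatchingOn E (shiftAlong M ℓ k) := by
  have hsub : ℓ '' ↑(range (k + 1)) ⊆ (M : Set (B × S)) := by
    rw [← coe_image]
    exact coe_subset.mpr (image_range_succ_subset hℓM)
  have hrange : ∀ {i}, i ∈ (↑(range k) : Set ℕ) → i ≤ k := fun hi => by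
    simp at hi; omega
  refine ⟨fun p hp => ?_, ?_, ?_⟩
  · rcases mem_union.mp hp with hp | hp
    · exact hM.1 p (mem_sdiff.mp hp).1
    · obtain ⟨i, hi, rfl⟩ := mem_image.mp hp
      exact hℓE i (mem_range.mp hi)
  · show Set.InjOn Prod.fst (↑(shiftAlong M ℓ k) : Set (B × S))
    rw [shiftAlong, coe_union, coe_sdiff, coe_image, coe_image]
    refine hM.injOn_fst.sdiff_union hsub (Set.InjOn.image_of_comp ?_) ?_
    · intro i hi j hj hij
      exact hinj (hrange hi) (hrange hj)
        (hM.injOn_fst (hℓM i (hrange hi)) (hℓM j (hrange hj)) hij)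
    · rintro _ ⟨_, ⟨i, hi, rfl⟩, rfl⟩
      exact ⟨ℓ i, Set.mem_image_of_mem ℓ (by simp at hi ⊢; omega), rfl⟩
  · show Set.InjOn Prod.snd (↑(shiftAlong M ℓ k) : Set (B × S))
    rw [shiftAlong, coe_union, coe_sdiff, coe_image, coe_image]
    refine hM.injOn_snd.sdiff_union hsub (Set.InjOn.image_of_comp ?_) ?_
    · intro i hi j hj hij
      have := hinj (show i + 1 ≤ k by simp at hi; omega) (show j + 1 ≤ k by simp at hj; omega)
        (hM.injOn_snd (hℓM (i + 1) (by simp at hi; omega)) (hℓM (j + 1) (by simp at hj; omega))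
          hij)
      omega
    · rintro _ ⟨_, ⟨i, hi, rfl⟩, rfl⟩
      exact ⟨ℓ (i + 1), Set.mem_image_of_mem ℓ (by simp at hi ⊢; omega), rfl⟩

theorem matchWeight_shiftAlong (b : B → ℝ) (s : S → ℝ) (hM : IsMatchingOn E M)
    (hℓM : ∀ i ≤ k, ℓ i ∈ M) (hinj : Set.InjOn ℓ (Set.Iic k)) :
    matchWeight b s (shiftAlong M ℓ k) = matchWeight b s M - (b (ℓ k).1 - s (ℓ 0).2) := by
  have hinjℓ : Set.InjOn ℓ ↑(range (k + 1)) := hinj.mono fun i hi => by simp at hi ⊢; omega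
  have hinjg : Set.InjOn (fun i => ((ℓ i).1, (ℓ (i + 1)).2)) ↑(range k) := by
    intro i hi j hj hij
    simp only [coe_range, Set.mem_Iio, Prod.mk.injEq] at hi hj hij
    exact hinj (show i ≤ k by omega) (show j ≤ k by omega)
      (hM.injOn_fst (hℓM i (by omega)) (hℓM j (by omega)) hij.1)
  have hdisj : Disjoint (M \ (range (k + 1)).image ℓ)
      ((range k).image fun i => ((ℓ i).1, (ℓ (i + 1)).2)) := by
    refine disjoint_right.mpr fun p hp hpM => ?_
    obtain ⟨i, hi, rfl⟩ := mem_image.mp hp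
    have hi : i < k := mem_range.mp hi
    -- a new edge lying in `M` shares its buyer with `ℓ i`, hence is `ℓ i`
    have := hM.injOn_fst (mem_sdiff.mp hpM).1 (hℓM i hi.le) rfl
    refine (mem_sdiff.mp hpM).2 ?_
    rw [this]
    exact mem_image_of_mem ℓ (mem_range.mpr (by omega))
  rw [matchWeight, matchWeight, shiftAlong, sum_union hdisj,
    sum_sdiff_eq_sub (image_range_succ_subset hℓM),
    sum_image hinjℓ, sum_image hinjg]
  simp only [sum_sub_distrib]
  rw [sum_range_succ (fun i => b (ℓ i).1), sum_range_succ' (fun i => s (ℓ i).2)]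
  ring

def alternatingStep (E : B → S → Prop) (M : Finset (B × S)) (x y : B × S) : Prop :=
  y ∈ M ∧ E x.1 y.2

theorem cost_le_value_of_reflTransGen {b : B → ℝ} {s : S → ℝ} (hM : IsMatchingOn E M)
    (hMmax : ∀ N, IsMatchingOn E N → matchWeight b s N ≤ matchWeight b s M) {e f : B × S}
    (he : e ∈ M) (h : Relation.ReflTransGen (alternatingStep E M) e f) : s e.2 ≤ b f.1 := by
  obtain ⟨k, ℓ, h0, hk, hstep, hinj⟩ := exists_injOn_chain_of_reflTransGen h
  have hℓM : ∀ i ≤ k, ℓ i ∈ M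
    | 0, _ => h0 ▸ he
    | i + 1, hi => (hstep i hi).1
  have := hMmax _ (isMatchingOn_shiftAlong hM hℓM (fun i hi => (hstep i hi).2) hinj)
  rw [matchWeight_shiftAlong b s hM hℓM hinj, h0, hk] at this
  linarith

end Matching

section Price

variable {B S : Type*} {E : B → S → Prop} {s : S → ℝ} {M : Finset (B × S)} {e f : B × S}

noncomputable def price (E : B → S → Prop) (s : S → ℝ) (M : Finset (B × S)) (e : B × S) :
    ℝ :=
  sSup ((fun e' => s e'.2) '' {e' | e' ∈ M ∧ Relation.ReflTransGen (alternatingStep E M) e' e})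

theorem cost_le_price {e' : B × S} (he' : e' ∈ M)
    (h : Relation.ReflTransGen (alternatingStep E M) e' e) : s e'.2 ≤ price E s M e := by
  refine le_csSup (Set.Finite.bddAbove (Set.Finite.image _ ?_)) ⟨e', ⟨he', h⟩, rfl⟩
  exact M.finite_toSet.subset fun _ h => h.1

theorem price_le_of_forall (he : e ∈ M) {c : ℝ}
    (h : ∀ e' ∈ M, Relation.ReflTransGen (alternatingStep E M) e' e → s e'.2 ≤ c) :
    price E s M e ≤ c := by
  refine csSup_le ⟨_, ⟨e, ⟨he, .refl⟩, rfl⟩⟩ ?_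
  rintro _ ⟨e', ⟨he', hr⟩, rfl⟩
  exact h e' he' hr

theorem price_le_value [DecidableEq B] [DecidableEq S] {b : B → ℝ} (hM : IsMatchingOn E M)
    (hMmax : ∀ N, IsMatchingOn E N → matchWeight b s N ≤ matchWeight b s M) (he : e ∈ M) :
    price E s M e ≤ b e.1 :=
  price_le_of_forall he fun _ he' hr => cost_le_value_of_reflTransGen hM hMmax he' hr

theorem price_mono (he : e ∈ M) (hf : f ∈ M) (hEf : E e.1 f.2) :
    price E s M e ≤ price E s M f :=
  price_le_of_forall he fun _ he' hr => cost_le_price he' (hr.tail ⟨hf, hEf⟩)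

theorem price_eq_of_buyer_adj_iff (hM : IsMatchingOn E M) (he : e ∈ M) (hf : f ∈ M)
    (h : ∀ j, E e.1 j ↔ E f.1 j) : price E s M e = price E s M f :=
  le_antisymm (price_mono he hf ((h _).mpr (hM.1 f hf))) (price_mono hf he ((h _).mp (hM.1 e he)))

theorem price_eq_of_seller_adj_iff (hM : IsMatchingOn E M) (he : e ∈ M) (hf : f ∈ M)
    (h : ∀ i, E i e.2 ↔ E i f.2) : price E s M e = price E s M f :=
  le_antisymm (price_mono he hf ((h _).mp (hM.1 e he))) (price_mono hf he ((h _).mpr (hM.1 f hf)))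

theorem exists_class_prices [DecidableEq B] [DecidableEq S] {b : B → ℝ} {ι κ : Type*}
    {cB : B → ι} {cS : S → κ} (hM : IsMatchingOn E M)
    (hMmax : ∀ N, IsMatchingOn E N → matchWeight b s N ≤ matchWeight b s M)
    (hcB : ∀ i i', cB i = cB i' → ∀ j, E i j ↔ E i' j)
    (hcS : ∀ j j', cS j = cS j' → ∀ i, E i j ↔ E i j') :
    ∃ (gB : ι → ℝ) (gS : κ → ℝ), (∀ e ∈ M, gB (cB e.1) ≤ b e.1) ∧
      (∀ e ∈ M, s e.2 ≤ gS (cS e.2)) ∧ ∀ e ∈ M, gB (cB e.1) = gS (cS e.2) := by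
  obtain ⟨gB, hgB⟩ := exists_eq_comp_of_forall_eq (c := fun e : B × S => cB e.1)
    fun e he f hf h => price_eq_of_buyer_adj_iff (s := s) hM he hf (hcB _ _ h)
  obtain ⟨gS, hgS⟩ := exists_eq_comp_of_forall_eq (c := fun e : B × S => cS e.2)
    fun e he f hf h => price_eq_of_seller_adj_iff (s := s) hM he hf (hcS _ _ h)
  exact ⟨gB, gS, fun e he => hgB e he ▸ price_le_value hM hMmax he,
    fun e he => hgS e he ▸ cost_le_price he .refl, fun e he => (hgB e he).symm.trans (hgS e he)⟩

end Price

theorem mul_matchWeight_le_sum_topSum_sub_sum_botSum {B S ι κ : Type*} [Fintype B] [Fintype S]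
    [DecidableEq ι] [DecidableEq κ] {b : B → ℝ} {s : S → ℝ} {cB : B → ι}
    {cS : S → κ} {M : Finset (B × S)} (hfst : Set.InjOn Prod.fst (M : Set (B × S)))
    (hsnd : Set.InjOn Prod.snd (M : Set (B × S))) {gB : ι → ℝ} {gS : κ → ℝ}
    (hgB : ∀ e ∈ M, gB (cB e.1) ≤ b e.1) (hgS : ∀ e ∈ M, s e.2 ≤ gS (cS e.2))
    (hg : ∀ e ∈ M, gB (cB e.1) = gS (cS e.2)) {α : ℝ}
    (hαB : ∀ t, (#((M.filter fun p => cB p.1 = t).image fun p => cS p.2) : ℝ) ≤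
      (1 - α) * #(M.filter fun p => cB p.1 = t))
    (hαS : ∀ u, (#((M.filter fun p => cS p.2 = u).image fun p => cB p.1) : ℝ) ≤
      (1 - α) * #(M.filter fun p => cS p.2 = u)) :
    α * matchWeight b s M ≤
      ∑ t ∈ M.image (fun e => cB e.1), topSum ((univ.filter fun i => cB i = t).val.map b)
          (#(M.filter fun p => cB p.1 = t) -
            #((M.filter fun p => cB p.1 = t).image fun p => cS p.2)) -
        ∑ u ∈ M.image (fun e => cS e.2), botSum ((univ.filter fun j => cS j = u).val.map s)
          (#(M.filter fun p => cS p.2 = u) -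
            #((M.filter fun p => cS p.2 = u).image fun p => cB p.1)) := by
  have hbuy := sum_sub_le_sum_topSum hfst hgB (fun _ => card_image_le) hαB
  have hsell := sum_botSum_le_sum_add hsnd hgS (fun _ => card_image_le) hαS
  have hcount := sum_card_image_mul_eq M (fun e => cB e.1) (fun e => cS e.2) hg
  have hW : matchWeight b s M = ∑ e ∈ M, b e.1 - ∑ e ∈ M, s e.2 := by
    rw [matchWeight, sum_sub_distrib]
  have hsurplus : (1 - α) * ∑ e ∈ M, (b e.1 - gB (cB e.1)) +
      (1 - α) * ∑ e ∈ M, (gS (cS e.2) - s e.2) = (1 - α) * matchWeight b s M := by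
    rw [← mul_add, ← sum_add_distrib, hW, ← sum_sub_distrib]
    exact congrArg _ (sum_congr rfl fun e he => by rw [hg e he]; ring)
  linarith

theorem trade_reduction_matching_markets_alpha_general
    {B S ι κ : Type*} [Fintype B] [Fintype S] [Fintype ι] [Fintype κ]
    [DecidableEq B] [DecidableEq S] [DecidableEq ι] [DecidableEq κ]
    (E : B → S → Prop) (b : B → ℝ) (s : S → ℝ)
    (cB : B → ι) (cS : S → κ)
    (hcB : ∀ i i', cB i = cB i' ↔ ∀ j, E i j ↔ E i' j)
    (hcS : ∀ j j', cS j = cS j' ↔ ∀ i, E i j ↔ E i j')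
    (M : Finset (B × S))
    (hM : IsMatchingOn E M)
    (hMmax : ∀ N, IsMatchingOn E N → matchWeight b s N ≤ matchWeight b s M)
    (qB : ι → ℕ) (hqB : ∀ t, qB t = (M.filter fun p => cB p.1 = t).card)
    (qS : κ → ℕ) (hqS : ∀ t, qS t = (M.filter fun p => cS p.2 = t).card)
    (dB : ι → ℕ)
    (hdB : ∀ t, dB t = ((M.filter fun p => cB p.1 = t).image fun p => cS p.2).card)
    (dS : κ → ℕ)
    (hdS : ∀ t, dS t = ((M.filter fun p => cS p.2 = t).image fun p => cB p.1).card) :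
    (∑ t ∈ univ.filter fun t => 0 < qB t,
        topSum ((univ.filter fun i => cB i = t).val.map b) (qB t - dB t)) -
      (∑ t ∈ univ.filter fun t => 0 < qS t,
        botSum ((univ.filter fun j => cS j = t).val.map s) (qS t - dS t)) ≥
    (sInf {x : ℝ | (∃ t : ι, 0 < qB t ∧ x = 1 - (dB t : ℝ) / (qB t : ℝ)) ∨
        (∃ t : κ, 0 < qS t ∧ x = 1 - (dS t : ℝ) / (qS t : ℝ))}) * matchWeight b s M := by
  set A := {x : ℝ | (∃ t : ι, 0 < qB t ∧ x = 1 - (dB t : ℝ) / (qB t : ℝ)) ∨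
    (∃ t : κ, 0 < qS t ∧ x = 1 - (dS t : ℝ) / (qS t : ℝ))}
  have hA : BddBelow A := Set.Finite.bddBelow <|
    ((Set.finite_range fun t => 1 - (dB t : ℝ) / qB t).union
      (Set.finite_range fun u => 1 - (dS u : ℝ) / qS u)).subset
      (by rintro x (⟨t, -, rfl⟩ | ⟨u, -, rfl⟩)
          exacts [Or.inl ⟨t, rfl⟩, Or.inr ⟨u, rfl⟩])
  have hαB : ∀ t, (dB t : ℝ) ≤ (1 - sInf A) * qB t := fun t =>
    natCast_le_one_sub_mul (hdB t ▸ hqB t ▸ card_image_le) fun ht =>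
      csInf_le hA (Or.inl ⟨t, ht, rfl⟩)
  have hαS : ∀ u, (dS u : ℝ) ≤ (1 - sInf A) * qS u := fun u =>
    natCast_le_one_sub_mul (hdS u ▸ hqS u ▸ card_image_le) fun hu =>
      csInf_le hA (Or.inr ⟨u, hu, rfl⟩)
  obtain ⟨gB, gS, hgB, hgS, hg⟩ := exists_class_prices (s := s) hM hMmax
    (fun i i' => (hcB i i').mp) (fun j j' => (hcS j j').mp)
  simp only [hqB, hqS, hdB, hdS] at hαB hαS ⊢
  rw [filter_card_filter_pos_eq_image M (fun e => cB e.1),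
    filter_card_filter_pos_eq_image M (fun e => cS e.2), ge_iff_le]
  exact mul_matchWeight_le_sum_topSum_sub_sum_botSum hM.injOn_fst hM.injOn_snd hgB hgS hg hαB hαS

/-- **Ex-post efficiency guarantee of the Trade Reduction mechanism for matching markets.**
`cB` (resp. `cS`) assigns to each buyer (resp. seller) its class: two buyers are of the same
class iff they have identical neighborhoods, and similarly for sellers. Let `M` be a nonempty
maximum-weight matching, and for each class `t` let `q_t` be the number of class-`t` agents
covered by `M` and `d_t` the number of distinct classes that `M` matches to class-`t` agents.
Then the Trade Reduction gains from trade — the sum over buyer classes `t` with `q_t > 0` of the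
`q_t - d_t` largest values among all class-`t` buyers, minus the sum over seller classes `t` with
`q_t > 0` of the `q_t - d_t` smallest costs among all class-`t` sellers — is at least
`α · OPT`, where `OPT` is the weight of `M` and `α = min { 1 - d_t/q_t : q_t > 0 }`. -/
theorem trade_reduction_matching_markets_alpha
    {B S ι κ : Type*} [Fintype B] [Fintype S] [Fintype ι] [Fintype κ]
    [DecidableEq B] [DecidableEq S] [DecidableEq ι] [DecidableEq κ]
    (E : B → S → Prop) (b : B → ℝ) (s : S → ℝ)
    (hbpos : ∀ i, 0 < b i) (hspos : ∀ j, 0 < s j)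
    (cB : B → ι) (cS : S → κ)
    (hcB : ∀ i i', cB i = cB i' ↔ ∀ j, E i j ↔ E i' j)
    (hcS : ∀ j j', cS j = cS j' ↔ ∀ i, E i j ↔ E i j')
    (M : Finset (B × S))
    (hM : IsMatchingOn E M) (hMne : M.Nonempty)
    (hMmax : ∀ N, IsMatchingOn E N → matchWeight b s N ≤ matchWeight b s M)
    (qB : ι → ℕ) (hqB : ∀ t, qB t = (M.filter fun p => cB p.1 = t).card)
    (qS : κ → ℕ) (hqS : ∀ t, qS t = (M.filter fun p => cS p.2 = t).card)
    (dB : ι → ℕ)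
    (hdB : ∀ t, dB t = ((M.filter fun p => cB p.1 = t).image fun p => cS p.2).card)
    (dS : κ → ℕ)
    (hdS : ∀ t, dS t = ((M.filter fun p => cS p.2 = t).image fun p => cB p.1).card) :
    (∑ t ∈ univ.filter fun t => 0 < qB t,
        topSum ((univ.filter fun i => cB i = t).val.map b) (qB t - dB t)) -
      (∑ t ∈ univ.filter fun t => 0 < qS t,
        botSum ((univ.filter fun j => cS j = t).val.map s) (qS t - dS t)) ≥
    (sInf {x : ℝ | (∃ t : ι, 0 < qB t ∧ x = 1 - (dB t : ℝ) / (qB t : ℝ)) ∨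
        (∃ t : κ, 0 < qS t ∧ x = 1 - (dS t : ℝ) / (qS t : ℝ))}) * matchWeight b s M :=
  trade_reduction_matching_markets_alpha_general E b s cB cS hcB hcS M hM hMmax qB hqB qS hqS dB hdB
    dS hdS
end

section
/- Feasibility of the Trade Reduction allocation for matching markets: let M be a maximum-weight matching of the matching market G. Then the winner set consisting, for each buyer class t with q_t > 0, of some q_t − d_t highest-value class-t buyers, and, for each seller class t with q_t > 0, of some q_t − d_t lowest-cost class-t sellers, admits a perfect matching in G; moreover, there is a perfect matching of this winner set in G having exactly r_{t,t'} − 1 edges between class-t agents and class-t' agents for every pair of classes t, t' with r_{t,t'} > 0. -/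
/-!
Adjacency depends only on classes, so one edge of `M` between classes `t` and `t'` makes
every class-`t` buyer adjacent to every class-`t'` seller. Splitting the `q_t` edges of `M`
at class `t` by the class of their other endpoint gives `q_t - d_t = ∑_{t'} (r_{t,t'} - 1)`,
and likewise for sellers. So the winners of each class can be cut into blocks of sizes
`r_{t,t'} - 1`, and the buyer block `(t, t')` is matched to the seller block `(t, t')`.
-/

open Finset

theorem IsMatchingOn.mono {B S : Type*} {E E' : B → S → Prop} {M : Finset (B × S)}
    (h : ∀ i j, E i j → E' i j) (hM : IsMatchingOn E M) : IsMatchingOn E' M :=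
  ⟨fun p hp => h _ _ (hM.1 p hp), hM.2⟩

theorem adj_of_card_filter_pos {B S ι κ : Type*} [DecidableEq ι] [DecidableEq κ]
    {E : B → S → Prop} {cB : B → ι} {cS : S → κ}
    (hcB : ∀ i i', cB i = cB i' → ∀ j, E i j ↔ E i' j)
    (hcS : ∀ j j', cS j = cS j' → ∀ i, E i j ↔ E i j')
    {M : Finset (B × S)} (hM : ∀ p ∈ M, E p.1 p.2) {i : B} {j : S}
    (hpos : 0 < #{p ∈ M | cB p.1 = cB i ∧ cS p.2 = cS j}) : E i j := by
  obtain ⟨p, hp⟩ := card_pos.mp hpos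
  obtain ⟨hpM, hpi, hpj⟩ := mem_filter.mp hp
  exact (hcS j p.2 hpj.symm i).mpr ((hcB i p.1 hpi.symm p.2).mpr (hM p hpM))

theorem Finset.sum_card_fiber_sub_one {α γ : Type*} [Fintype γ] [DecidableEq γ]
    (s : Finset α) (f : α → γ) :
    ∑ y, (#{a ∈ s | f a = y} - 1) = #s - #(s.image f) := by
  have hfiber : ∀ y, #{a ∈ s | f a = y} - 1 + (if y ∈ s.image f then 1 else 0)
      = #{a ∈ s | f a = y} := by
    intro y
    have hpos : 0 < #{a ∈ s | f a = y} ↔ y ∈ s.image f := by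
      simp [card_pos, filter_nonempty_iff]
    by_cases hy : y ∈ s.image f
    · have := hpos.mpr hy
      rw [if_pos hy]
      omega
    · have := mt hpos.mp hy
      rw [if_neg hy]
      omega
  have hsum := congrArg (fun g : γ → ℕ => ∑ y, g y) (funext hfiber)
  simp only [sum_add_distrib, sum_boole, Nat.cast_id, filter_mem_eq_inter, univ_inter] at hsum
  rw [← card_eq_sum_card_fiberwise (fun a _ => mem_univ (f a))] at hsum
  omega

theorem Fintype.card_subtype_sigma_fin {P γ : Type*} [Fintype P] [DecidableEq γ]
    (n : P → ℕ) (φ : P → γ) (c : γ) :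
    Fintype.card {x : Σ p, Fin (n p) // φ x.1 = c} = ∑ p with φ p = c, n p := by
  rw [Fintype.card_subtype]
  trans #((univ.filter (φ · = c)).sigma fun p => (univ : Finset (Fin (n p))))
  · congr 1
    ext x
    simp
  · simp

theorem Finset.sum_filter_fst_eq {ι κ M : Type*} [Fintype ι] [Fintype κ] [DecidableEq ι]
    [AddCommMonoid M] (f : ι × κ → M) (t : ι) :
    ∑ p with p.1 = t, f p = ∑ t', f (t, t') := by
  rw [sum_filter, Fintype.sum_prod_type, sum_eq_single t (fun x _ hx => by simp [hx]) (by simp)]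
  simp

theorem Finset.sum_filter_snd_eq {ι κ M : Type*} [Fintype ι] [Fintype κ] [DecidableEq κ]
    [AddCommMonoid M] (f : ι × κ → M) (t' : κ) :
    ∑ p with p.2 = t', f p = ∑ t, f (t, t') := by
  rw [sum_filter, Fintype.sum_prod_type_right,
    sum_eq_single t' (fun x _ hx => by simp [hx]) (by simp)]
  simp

theorem Fintype.card_subtype_mem_biUnion {α ι : Type*} [Fintype ι] [DecidableEq α]
    [DecidableEq ι] {c : α → ι} {W : ι → Finset α} (hW : ∀ t, ∀ a ∈ W t, c a = t) (t : ι) :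
    Fintype.card {a : ↥(univ.biUnion W) // c a = t} = #(W t) := by
  rw [← Fintype.card_coe (W t)]
  refine Fintype.card_congr
    ((Equiv.subtypeSubtypeEquivSubtypeInter (· ∈ univ.biUnion W) (c · = t)).trans
      (Equiv.subtypeEquivRight fun a => ?_))
  simp only [mem_biUnion, mem_univ, true_and]
  constructor
  · rintro ⟨⟨t', ha⟩, rfl⟩
    rwa [hW t' a ha]
  · exact fun ha => ⟨⟨t, ha⟩, hW t a ha⟩

theorem exists_equiv_of_card_fiber_eq {X Y γ : Type*} [Fintype X] [Fintype Y] [DecidableEq γ]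
    (π : X → γ) (c : Y → γ)
    (h : ∀ t, Fintype.card {x // π x = t} = Fintype.card {y // c y = t}) :
    ∃ e : X ≃ Y, ∀ x, c (e x) = π x :=
  ⟨Equiv.ofFiberEquiv fun t => Fintype.equivOfCardEq (h t), Equiv.ofFiberEquiv_map _⟩

theorem Finset.image_univ_equiv_subtype {X α : Type*} [Fintype X] [DecidableEq α] {s : Finset α}
    (e : X ≃ s) : univ.image (fun x => (e x : α)) = s := by
  rw [show (fun x => (e x : α)) = Subtype.val ∘ e from rfl, ← image_image, image_univ_equiv,
    univ_eq_attach, attach_image_val]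

-- Both vertex sets are put in bijection, class by class, with `Σ (t, t'), Fin (g t t')`.
theorem exists_matching_of_card_eq_sum {B S ι κ : Type*} [Fintype ι] [Fintype κ]
    [DecidableEq B] [DecidableEq S] [DecidableEq ι] [DecidableEq κ]
    (cB : B → ι) (cS : S → κ) (g : ι → κ → ℕ) {WB : ι → Finset B} {WS : κ → Finset S}
    (hWB : ∀ t, ∀ i ∈ WB t, cB i = t) (hWS : ∀ t', ∀ j ∈ WS t', cS j = t')
    (hcardB : ∀ t, #(WB t) = ∑ t', g t t') (hcardS : ∀ t', #(WS t') = ∑ t, g t t') :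
    ∃ M : Finset (B × S), IsMatchingOn (fun i j => 0 < g (cB i) (cS j)) M ∧
      M.image Prod.fst = univ.biUnion WB ∧ M.image Prod.snd = univ.biUnion WS ∧
      ∀ t t', #{p ∈ M | cB p.1 = t ∧ cS p.2 = t'} = g t t' := by
  have hfiberB : ∀ t, Fintype.card {x : Σ p : ι × κ, Fin (g p.1 p.2) // x.1.1 = t}
      = Fintype.card {i : ↥(univ.biUnion WB) // cB i = t} := fun t => by
    rw [Fintype.card_subtype_sigma_fin, Fintype.card_subtype_mem_biUnion hWB, hcardB,
      sum_filter_fst_eq (fun p => g p.1 p.2)]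
  have hfiberS : ∀ t', Fintype.card {x : Σ p : ι × κ, Fin (g p.1 p.2) // x.1.2 = t'}
      = Fintype.card {j : ↥(univ.biUnion WS) // cS j = t'} := fun t' => by
    rw [Fintype.card_subtype_sigma_fin, Fintype.card_subtype_mem_biUnion hWS, hcardS,
      sum_filter_snd_eq (fun p => g p.1 p.2)]
  obtain ⟨eB, heB⟩ := exists_equiv_of_card_fiber_eq _ _ hfiberB
  obtain ⟨eS, heS⟩ := exists_equiv_of_card_fiber_eq _ _ hfiberS
  let F : (Σ p : ι × κ, Fin (g p.1 p.2)) ↪ B × S :=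
    ⟨fun x => ((eB x : B), (eS x : S)),
      fun x y h => eB.injective (Subtype.ext (congrArg Prod.fst h))⟩
  have hF : ∀ x, F x = ((eB x : B), (eS x : S)) := fun _ => rfl
  refine ⟨univ.map F, ⟨?_, ?_, ?_⟩, ?_, ?_, fun t t' => ?_⟩
  · simp only [forall_mem_map, mem_univ, true_implies]
    intro x
    simpa [hF, heB, heS] using x.2.pos
  · simp only [forall_mem_map, mem_univ, true_implies]
    exact fun x y h => by rw [eB.injective (Subtype.ext h)]
  · simp only [forall_mem_map, mem_univ, true_implies]
    exact fun x y h => by rw [eS.injective (Subtype.ext h)]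
  · rw [map_eq_image, image_image]
    exact image_univ_equiv_subtype eB
  · rw [map_eq_image, image_image]
    exact image_univ_equiv_subtype eS
  · calc #{p ∈ univ.map F | cB p.1 = t ∧ cS p.2 = t'}
        = #{x : Σ p : ι × κ, Fin (g p.1 p.2) | x.1 = (t, t')} := by
          rw [filter_map, card_map]
          congr 1
          ext x
          simp [hF, heB, heS, Prod.ext_iff]
      _ = g t t' := by
          rw [← Fintype.card_subtype, Fintype.card_congr (Equiv.sigmaSubtype (t, t')),
            Fintype.card_fin]

theorem trade_reduction_matching_markets_feasibility_general
    {B S ι κ : Type*} [Fintype ι] [Fintype κ]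
    [DecidableEq B] [DecidableEq S] [DecidableEq ι] [DecidableEq κ]
    (E : B → S → Prop)
    (cB : B → ι) (cS : S → κ)
    (hcB : ∀ i i', cB i = cB i' ↔ ∀ j, E i j ↔ E i' j)
    (hcS : ∀ j j', cS j = cS j' ↔ ∀ i, E i j ↔ E i j')
    (M : Finset (B × S))
    (hM : IsMatchingOn E M)
    (qB : ι → ℕ) (hqB : ∀ t, qB t = (M.filter fun p => cB p.1 = t).card)
    (qS : κ → ℕ) (hqS : ∀ t, qS t = (M.filter fun p => cS p.2 = t).card)
    (dB : ι → ℕ)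
    (hdB : ∀ t, dB t = ((M.filter fun p => cB p.1 = t).image fun p => cS p.2).card)
    (dS : κ → ℕ)
    (hdS : ∀ t, dS t = ((M.filter fun p => cS p.2 = t).image fun p => cB p.1).card)
    (r : ι → κ → ℕ)
    (hr : ∀ t t', r t t' = (M.filter fun p => cB p.1 = t ∧ cS p.2 = t').card)
    (WB : ι → Finset B) (WS : κ → Finset S)
    (hWBmem : ∀ t, ∀ i ∈ WB t, cB i = t)
    (hWBcard : ∀ t, (WB t).card = qB t - dB t)
    (hWSmem : ∀ t, ∀ j ∈ WS t, cS j = t)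
    (hWScard : ∀ t, (WS t).card = qS t - dS t) :
    ∃ M' : Finset (B × S), IsMatchingOn E M' ∧
      M'.image Prod.fst = Finset.univ.biUnion WB ∧
      M'.image Prod.snd = Finset.univ.biUnion WS ∧
      ∀ t t', 0 < r t t' →
        (M'.filter fun p => cB p.1 = t ∧ cS p.2 = t').card = r t t' - 1 := by
  have hcardB : ∀ t, #(WB t) = ∑ t', (r t t' - 1) := fun t => by
    rw [hWBcard, hqB, hdB, ← sum_card_fiber_sub_one]
    simp only [hr, filter_filter]
  have hcardS : ∀ t', #(WS t') = ∑ t, (r t t' - 1) := fun t' => by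
    rw [hWScard, hqS, hdS, ← sum_card_fiber_sub_one]
    simp only [hr, filter_filter, and_comm]
  obtain ⟨M', hM', hfst, hsnd, hblock⟩ :=
    exists_matching_of_card_eq_sum cB cS (fun t t' => r t t' - 1) hWBmem hWSmem hcardB hcardS
  refine ⟨M', hM'.mono fun i j hij => ?_, hfst, hsnd, fun t t' _ => hblock t t'⟩
  exact adj_of_card_filter_pos (fun i i' => (hcB i i').mp) (fun j j' => (hcS j j').mp) hM.1
    (hr _ _ ▸ hij.trans_le (Nat.sub_le _ _))

/-- **Feasibility of the Trade Reduction allocation for matching markets.**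
Let `M` be a maximum-weight matching of the matching market. For each buyer class `t` let
`WB t` be a set of `q_t - d_t` highest-value class-`t` buyers, and for each seller class `t`
let `WS t` be a set of `q_t - d_t` lowest-cost class-`t` sellers. Then this winner set admits
a perfect matching in the market graph; moreover, there is such a perfect matching having
exactly `r t t' - 1` edges between class-`t` buyers and class-`t'` sellers for every pair of
classes with `r t t' > 0`, where `r t t'` is the number of edges of `M` joining a class-`t`
buyer and a class-`t'` seller. -/
theorem trade_reduction_matching_markets_feasibility
    {B S ι κ : Type*} [Fintype B] [Fintype S] [Fintype ι] [Fintype κ]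
    [DecidableEq B] [DecidableEq S] [DecidableEq ι] [DecidableEq κ]
    (E : B → S → Prop) (b : B → ℝ) (s : S → ℝ)
    (hbpos : ∀ i, 0 < b i) (hspos : ∀ j, 0 < s j)
    (cB : B → ι) (cS : S → κ)
    (hcB : ∀ i i', cB i = cB i' ↔ ∀ j, E i j ↔ E i' j)
    (hcS : ∀ j j', cS j = cS j' ↔ ∀ i, E i j ↔ E i j')
    (M : Finset (B × S))
    (hM : IsMatchingOn E M)
    (hMmax : ∀ N, IsMatchingOn E N → matchWeight b s N ≤ matchWeight b s M)
    (qB : ι → ℕ) (hqB : ∀ t, qB t = (M.filter fun p => cB p.1 = t).card)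
    (qS : κ → ℕ) (hqS : ∀ t, qS t = (M.filter fun p => cS p.2 = t).card)
    (dB : ι → ℕ)
    (hdB : ∀ t, dB t = ((M.filter fun p => cB p.1 = t).image fun p => cS p.2).card)
    (dS : κ → ℕ)
    (hdS : ∀ t, dS t = ((M.filter fun p => cS p.2 = t).image fun p => cB p.1).card)
    (r : ι → κ → ℕ)
    (hr : ∀ t t', r t t' = (M.filter fun p => cB p.1 = t ∧ cS p.2 = t').card)
    (WB : ι → Finset B) (WS : κ → Finset S)
    (hWBmem : ∀ t, ∀ i ∈ WB t, cB i = t)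
    (hWBcard : ∀ t, (WB t).card = qB t - dB t)
    (hWBtop : ∀ t, ∀ i ∈ WB t, ∀ i', cB i' = t → i' ∉ WB t → b i' ≤ b i)
    (hWSmem : ∀ t, ∀ j ∈ WS t, cS j = t)
    (hWScard : ∀ t, (WS t).card = qS t - dS t)
    (hWSbot : ∀ t, ∀ j ∈ WS t, ∀ j', cS j' = t → j' ∉ WS t → s j ≤ s j') :
    ∃ M' : Finset (B × S), IsMatchingOn E M' ∧
      M'.image Prod.fst = Finset.univ.biUnion WB ∧
      M'.image Prod.snd = Finset.univ.biUnion WS ∧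
      ∀ t t', 0 < r t t' →
        (M'.filter fun p => cB p.1 = t ∧ cS p.2 = t').card = r t t' - 1 :=
  trade_reduction_matching_markets_feasibility_general E cB cS hcB hcS M hM qB hqB qS hqS dB hdB dS
    hdS r hr WB WS hWBmem hWBcard hWSmem hWScard
end

section
/- VCG payments never run a surplus for the mechanism on a traded edge: let G be a matching market, let W* denote the maximum weight over all matchings of G, and for a vertex v let W*_{−v} denote the maximum weight over all matchings of G leaving v uncovered. If (i,j) is an edge of some maximum-weight matching of G, then the VCG payment received by seller j is at least the VCG payment made by buyer i: (W* − W*_{−j} + s_j) ≥ (W*_{−i} − W* + b_i); equivalently, 2·W* ≥ W*_{−i} + W*_{−j} + (b_i − s_j). -/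
/-! Let `X` be a best matching missing buyer `i` and `Y` a best matching missing seller `j`.
Walk the alternating path of `X`- and `Y`-edges that starts at `j`; it enters buyers only
through `X`-edges, so it never reaches `i`. Swapping the edges of this path between `X` and `Y`
regroups the edges of `X` and `Y` into two matchings `A` and `C` with `A` missing both `i` and
`j`. Then `A ∪ {(i, j)}` and `C` are matchings of the market, whence
`W*₋ᵢ + W*₋ⱼ + (bᵢ - sⱼ) = w(A ∪ {(i, j)}) + w(C) ≤ 2 W*`. -/

open Finset

lemma Finset.exists_cons_eq_of_mem {α : Type*} {s : Finset α} {a : α} (ha : a ∈ s) :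
    ∃ t h, cons a t h = s := by
  classical
  exact ⟨s.erase a, notMem_erase a s, by rw [cons_eq_insert, insert_erase ha]⟩

lemma forall_mem_of_val_add_eq {α : Type*} {A C X Y : Finset α} {q : α → Prop}
    (h : A.val + C.val = X.val + Y.val) (hX : ∀ p ∈ X, q p) (hY : ∀ p ∈ Y, q p) :
    (∀ p ∈ A, q p) ∧ (∀ p ∈ C, q p) := by
  have hXY : ∀ p ∈ A.val + C.val, q p := by
    rw [h]
    intro p hp
    rcases Multiset.mem_add.1 hp with hp | hp
    exacts [hX p hp, hY p hp]
  exact ⟨fun p hp => hXY p (Multiset.mem_add.2 (Or.inl hp)),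
    fun p hp => hXY p (Multiset.mem_add.2 (Or.inr hp))⟩

section Matching

variable {B S : Type*}

lemma isMatchingOn_cons {E : B → S → Prop} {M : Finset (B × S)} {e : B × S} (he : e ∉ M) :
    IsMatchingOn E (cons e M he) ↔
      E e.1 e.2 ∧ (∀ p ∈ M, p.1 ≠ e.1) ∧ (∀ p ∈ M, p.2 ≠ e.2) ∧ IsMatchingOn E M := by
  simp only [IsMatchingOn, mem_cons]
  grind

lemma matchWeight_cons (b : B → ℝ) (s : S → ℝ) {M : Finset (B × S)} {e : B × S} (he : e ∉ M) :
    matchWeight b s (cons e M he) = (b e.1 - s e.2) + matchWeight b s M :=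
  sum_cons he

lemma matchWeight_add_eq_of_val_add_eq (b : B → ℝ) (s : S → ℝ) {A C X Y : Finset (B × S)}
    (h : A.val + C.val = X.val + Y.val) :
    matchWeight b s A + matchWeight b s C = matchWeight b s X + matchWeight b s Y := by
  simp only [matchWeight, sum_eq_multiset_sum, ← Multiset.sum_add, ← Multiset.map_add, h]

theorem exists_regroup_avoiding {E : B → S → Prop} {i : B} :
    ∀ {X Y : Finset (B × S)} {j : S}, IsMatchingOn E X → IsMatchingOn E Y →
      (∀ p ∈ X, p.1 ≠ i) → (∀ p ∈ Y, p.2 ≠ j) →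
      ∃ A C : Finset (B × S), IsMatchingOn E A ∧ IsMatchingOn E C ∧
        A.val + C.val = X.val + Y.val ∧ (∀ p ∈ A, p.1 ≠ i) ∧ (∀ p ∈ A, p.2 ≠ j) := by
  intro X
  induction X using Finset.strongInduction with
  | H X ih =>
  intro Y j hX hY hXi hYj
  by_cases hjX : ∃ i₂, (i₂, j) ∈ X
  swap
  · rw [not_exists] at hjX
    exact ⟨X, Y, hX, hY, rfl, hXi, fun p hp h => hjX p.1 (h ▸ hp)⟩
  obtain ⟨i₂, hi₂⟩ := hjX
  obtain ⟨X', hnotX', rfl⟩ := exists_cons_eq_of_mem hi₂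
  obtain ⟨hEX, hX'i₂, hX'j, hX'⟩ := (isMatchingOn_cons _).1 hX
  obtain ⟨hi₂i, hX'i⟩ := (forall_mem_cons _ _).1 hXi
  by_cases hi₂Y : ∃ j₂, (i₂, j₂) ∈ Y
  swap
  · rw [not_exists] at hi₂Y
    have hYi₂ : ∀ p ∈ Y, p.1 ≠ i₂ := fun ⟨_, c⟩ hp (h : _ = i₂) => hi₂Y c (h ▸ hp)
    refine ⟨X', cons (i₂, j) Y fun h => hYj _ h rfl, hX',
      (isMatchingOn_cons _).2 ⟨hEX, hYi₂, hYj, hY⟩, ?_, hX'i, hX'j⟩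
    simp [Multiset.add_cons, Multiset.cons_add]
  -- `(i₂, j) ∈ X` and `(i₂, j₂) ∈ Y` are the first two edges of the alternating path from `j`;
  -- regroup the rest of the path recursively, now avoiding `j₂`.
  obtain ⟨j₂, hj₂⟩ := hi₂Y
  obtain ⟨Y', hnotY', rfl⟩ := exists_cons_eq_of_mem hj₂
  obtain ⟨hEY, hY'i₂, hY'j₂, hY'⟩ := (isMatchingOn_cons _).1 hY
  obtain ⟨hj₂j, hY'j⟩ := (forall_mem_cons _ _).1 hYj
  obtain ⟨A, C, hA, hC, hAC, hAi, hAj₂⟩ := ih X' (ssubset_cons _) hX' hY' hX'i hY'j₂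
  obtain ⟨hAi₂, hCi₂⟩ := forall_mem_of_val_add_eq hAC hX'i₂ hY'i₂
  obtain ⟨hAj, hCj⟩ := forall_mem_of_val_add_eq hAC hX'j hY'j
  refine ⟨cons (i₂, j₂) A fun h => hAi₂ _ h rfl, cons (i₂, j) C fun h => hCi₂ _ h rfl,
    (isMatchingOn_cons _).2 ⟨hEY, hAi₂, hAj₂, hA⟩, (isMatchingOn_cons _).2 ⟨hEX, hCi₂, hCj, hC⟩,
    ?_, (forall_mem_cons _ _).2 ⟨hi₂i, hAi⟩, (forall_mem_cons _ _).2 ⟨hj₂j, hAj⟩⟩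
  simp [Multiset.add_cons, Multiset.cons_add, hAC, Multiset.cons_swap]

end Matching

theorem vcg_payment_no_deficit_general
    {B S : Type*}
    (E : B → S → Prop) (b : B → ℝ) (s : S → ℝ)
    (i : B) (j : S) (Wstar Wi Wj : ℝ)
    (hW : IsGreatest {x : ℝ | ∃ M, IsMatchingOn E M ∧ x = matchWeight b s M} Wstar)
    (hWi : IsGreatest
      {x : ℝ | ∃ M, IsMatchingOn E M ∧ (∀ p ∈ M, p.1 ≠ i) ∧ x = matchWeight b s M} Wi)
    (hWj : IsGreatest
      {x : ℝ | ∃ M, IsMatchingOn E M ∧ (∀ p ∈ M, p.2 ≠ j) ∧ x = matchWeight b s M} Wj)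
    (hedge : ∃ M, IsMatchingOn E M ∧ matchWeight b s M = Wstar ∧ (i, j) ∈ M) :
    Wstar - Wj + s j ≥ Wi - Wstar + b i := by
  obtain ⟨M, hM, -, hij⟩ := hedge
  obtain ⟨X, hX, hXi, rfl⟩ := hWi.1
  obtain ⟨Y, hY, hYj, rfl⟩ := hWj.1
  obtain ⟨A, C, hA, hC, hAC, hAi, hAj⟩ := exists_regroup_avoiding hX hY hXi hYj
  have hijA : (i, j) ∉ A := fun h => hAi _ h rfl
  have hA' : IsMatchingOn E (cons (i, j) A hijA) :=
    (isMatchingOn_cons hijA).2 ⟨hM.1 _ hij, hAi, hAj, hA⟩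
  have hA'W := hW.2 ⟨_, hA', rfl⟩
  have hCW := hW.2 ⟨C, hC, rfl⟩
  rw [matchWeight_cons] at hA'W
  linarith [matchWeight_add_eq_of_val_add_eq b s hAC]

/-- **VCG payments never run a surplus for the mechanism on a traded edge.**
Let `Wstar` be the maximum weight over all matchings of the market graph, let `Wi`
(resp. `Wj`) be the maximum weight over matchings leaving buyer `i` (resp. seller `j`)
uncovered. If `(i,j)` is an edge of some maximum-weight matching, then the VCG payment
received by seller `j` is at least the VCG payment made by buyer `i`:
`Wstar - Wj + s j ≥ Wi - Wstar + b i`. -/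
theorem vcg_payment_no_deficit
    {B S : Type*} [Fintype B] [Fintype S]
    (E : B → S → Prop) (b : B → ℝ) (s : S → ℝ)
    (hbpos : ∀ i, 0 < b i) (hspos : ∀ j, 0 < s j)
    (i : B) (j : S) (Wstar Wi Wj : ℝ)
    (hW : IsGreatest {x : ℝ | ∃ M, IsMatchingOn E M ∧ x = matchWeight b s M} Wstar)
    (hWi : IsGreatest
      {x : ℝ | ∃ M, IsMatchingOn E M ∧ (∀ p ∈ M, p.1 ≠ i) ∧ x = matchWeight b s M} Wi)
    (hWj : IsGreatest
      {x : ℝ | ∃ M, IsMatchingOn E M ∧ (∀ p ∈ M, p.2 ≠ j) ∧ x = matchWeight b s M} Wj)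
    (hedge : ∃ M, IsMatchingOn E M ∧ matchWeight b s M = Wstar ∧ (i, j) ∈ M) :
    Wstar - Wj + s j ≥ Wi - Wstar + b i :=
  vcg_payment_no_deficit_general E b s i j Wstar Wi Wj hW hWi hWj hedge
end

section
/- Let G be a matching market, let M be a maximum-weight matching of G with weight W*, and let (i,j) ∈ M. If some maximum-weight matching among those leaving buyer i uncovered also leaves seller j uncovered, then W*_{−i} = W* − (b_i − s_j), where W*_{−i} is the maximum weight over matchings leaving i uncovered; consequently, buyer i's VCG payment W*_{−i} − W* + b_i equals s_j. Symmetrically, if some maximum-weight matching among those leaving seller j uncovered also leaves buyer i uncovered, then W*_{−j} = W* − (b_i − s_j) and seller j's VCG payment W* − W*_{−j} + s_j equals b_i. -/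
/-!
Deleting the edge `(i, j)` from `M` leaves a matching that avoids both `i` and `j`, of weight
`W* - (b i - s j)`; conversely, adding `(i, j)` to any matching that avoids both `i` and `j`
gives a matching, so by maximality of `M` such a matching weighs at most `W* - (b i - s j)`.
Hence, when an optimum without `i` (or without `j`) avoids the partner as well, that optimum
is exactly `W* - (b i - s j)`.
-/

namespace IsMatchingOn

variable {B S : Type*} {E : B → S → Prop} {M N : Finset (B × S)}

theorem mono_s8 (hM : IsMatchingOn E M) (hNM : N ⊆ M) : IsMatchingOn E N :=
  ⟨fun p hp => hM.1 p (hNM hp),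
   fun p hp q hq => hM.2.1 p (hNM hp) q (hNM hq),
   fun p hp q hq => hM.2.2 p (hNM hp) q (hNM hq)⟩

theorem insert [DecidableEq B] [DecidableEq S] (hN : IsMatchingOn E N) {i : B} {j : S}
    (hE : E i j) (hNi : ∀ p ∈ N, p.1 ≠ i) (hNj : ∀ p ∈ N, p.2 ≠ j) :
    IsMatchingOn E (insert (i, j) N) := by
  have forall_insert := fun P : B × S → Prop => (Finset.forall_mem_insert (i, j) N P).2
  exact ⟨forall_insert _ ⟨hE, hN.1⟩,
    forall_insert _ ⟨forall_insert _ ⟨fun _ => rfl, fun q hq h => absurd h.symm (hNi q hq)⟩,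
      fun p hp => forall_insert _ ⟨fun h => absurd h (hNi p hp), hN.2.1 p hp⟩⟩,
    forall_insert _ ⟨forall_insert _ ⟨fun _ => rfl, fun q hq h => absurd h.symm (hNj q hq)⟩,
      fun p hp => forall_insert _ ⟨fun h => absurd h (hNj p hp), hN.2.2 p hp⟩⟩⟩

theorem fst_ne_of_mem_erase [DecidableEq B] [DecidableEq S] (hM : IsMatchingOn E M)
    {i : B} {j : S} (hij : (i, j) ∈ M) {p : B × S} (hp : p ∈ M.erase (i, j)) : p.1 ≠ i :=
  fun h => Finset.ne_of_mem_erase hp (hM.2.1 p (Finset.mem_of_mem_erase hp) _ hij h)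

theorem snd_ne_of_mem_erase [DecidableEq B] [DecidableEq S] (hM : IsMatchingOn E M)
    {i : B} {j : S} (hij : (i, j) ∈ M) {p : B × S} (hp : p ∈ M.erase (i, j)) : p.2 ≠ j :=
  fun h => Finset.ne_of_mem_erase hp (hM.2.2 p (Finset.mem_of_mem_erase hp) _ hij h)

end IsMatchingOn

section Weight

variable {B S : Type*} [DecidableEq B] [DecidableEq S] (b : B → ℝ) (s : S → ℝ)
  {M N : Finset (B × S)} {i : B} {j : S}

theorem matchWeight_insert (hij : (i, j) ∉ N) :
    matchWeight b s (insert (i, j) N) = matchWeight b s N + (b i - s j) := by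
  rw [matchWeight, Finset.sum_insert hij, add_comm]
  rfl

theorem matchWeight_erase (hij : (i, j) ∈ M) :
    matchWeight b s (M.erase (i, j)) = matchWeight b s M - (b i - s j) := by
  rw [eq_sub_iff_add_eq, matchWeight, matchWeight, Finset.sum_erase_add M _ hij]

variable {E : B → S → Prop}

theorem matchWeight_le_of_avoids_edge_of_isMax (hM : IsMatchingOn E M)
    (hMmax : ∀ N, IsMatchingOn E N → matchWeight b s N ≤ matchWeight b s M)
    (hij : (i, j) ∈ M) (hN : IsMatchingOn E N)
    (hNi : ∀ p ∈ N, p.1 ≠ i) (hNj : ∀ p ∈ N, p.2 ≠ j) :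
    matchWeight b s N ≤ matchWeight b s M - (b i - s j) := by
  have hins := hMmax _ (hN.insert (hM.1 _ hij) hNi hNj)
  rw [matchWeight_insert b s fun h => hNi _ h rfl] at hins
  linarith

theorem eq_matchWeight_sub_of_attained_avoiding_edge (hM : IsMatchingOn E M)
    (hMmax : ∀ N, IsMatchingOn E N → matchWeight b s N ≤ matchWeight b s M)
    (hij : (i, j) ∈ M) {W : ℝ} (hW : matchWeight b s (M.erase (i, j)) ≤ W)
    (hN : IsMatchingOn E N) (hNi : ∀ p ∈ N, p.1 ≠ i) (hNj : ∀ p ∈ N, p.2 ≠ j)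
    (hNW : matchWeight b s N = W) :
    W = matchWeight b s M - (b i - s j) := by
  rw [matchWeight_erase b s hij] at hW
  have := matchWeight_le_of_avoids_edge_of_isMax b s hM hMmax hij hN hNi hNj
  linarith

end Weight

theorem vcg_price_when_partner_uncovered_general
    {B S : Type*}
    (E : B → S → Prop) (b : B → ℝ) (s : S → ℝ)
    (M : Finset (B × S)) (hM : IsMatchingOn E M)
    (hMmax : ∀ N, IsMatchingOn E N → matchWeight b s N ≤ matchWeight b s M)
    (i : B) (j : S) (hij : (i, j) ∈ M) (Wi Wj : ℝ)
    (hWi : IsGreatest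
      {x : ℝ | ∃ N, IsMatchingOn E N ∧ (∀ p ∈ N, p.1 ≠ i) ∧ x = matchWeight b s N} Wi)
    (hWj : IsGreatest
      {x : ℝ | ∃ N, IsMatchingOn E N ∧ (∀ p ∈ N, p.2 ≠ j) ∧ x = matchWeight b s N} Wj) :
    ((∃ N, IsMatchingOn E N ∧ (∀ p ∈ N, p.1 ≠ i) ∧ matchWeight b s N = Wi ∧
        (∀ p ∈ N, p.2 ≠ j)) →
      Wi = matchWeight b s M - (b i - s j) ∧ Wi - matchWeight b s M + b i = s j) ∧
    ((∃ N, IsMatchingOn E N ∧ (∀ p ∈ N, p.2 ≠ j) ∧ matchWeight b s N = Wj ∧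
        (∀ p ∈ N, p.1 ≠ i)) →
      Wj = matchWeight b s M - (b i - s j) ∧ matchWeight b s M - Wj + s j = b i) := by
  classical
  have hErase := hM.mono_s8 (M.erase_subset (i, j))
  constructor
  · rintro ⟨N, hN, hNi, hNW, hNj⟩
    have hWi_eq := eq_matchWeight_sub_of_attained_avoiding_edge b s hM hMmax hij
      (hWi.2 ⟨_, hErase, fun _ => hM.fst_ne_of_mem_erase hij, rfl⟩) hN hNi hNj hNW
    exact ⟨hWi_eq, by linarith⟩
  · rintro ⟨N, hN, hNj, hNW, hNi⟩
    have hWj_eq := eq_matchWeight_sub_of_attained_avoiding_edge b s hM hMmax hij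
      (hWj.2 ⟨_, hErase, fun _ => hM.snd_ne_of_mem_erase hij, rfl⟩) hN hNi hNj hNW
    exact ⟨hWj_eq, by linarith⟩

/-- **VCG prices when the partner is also left uncovered.** Let `M` be a maximum-weight
matching with weight `W* = matchWeight b s M` and `(i,j) ∈ M`, and let `Wi` (resp. `Wj`)
be the maximum weight over matchings leaving buyer `i` (resp. seller `j`) uncovered.
If some maximum-weight matching among those leaving `i` uncovered also leaves `j` uncovered,
then `Wi = W* - (b i - s j)` and buyer `i`'s VCG payment `Wi - W* + b i` equals `s j`;
symmetrically for seller `j`. -/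
theorem vcg_price_when_partner_uncovered
    {B S : Type*} [Fintype B] [Fintype S]
    (E : B → S → Prop) (b : B → ℝ) (s : S → ℝ)
    (hbpos : ∀ i, 0 < b i) (hspos : ∀ j, 0 < s j)
    (M : Finset (B × S)) (hM : IsMatchingOn E M)
    (hMmax : ∀ N, IsMatchingOn E N → matchWeight b s N ≤ matchWeight b s M)
    (i : B) (j : S) (hij : (i, j) ∈ M) (Wi Wj : ℝ)
    (hWi : IsGreatest
      {x : ℝ | ∃ N, IsMatchingOn E N ∧ (∀ p ∈ N, p.1 ≠ i) ∧ x = matchWeight b s N} Wi)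
    (hWj : IsGreatest
      {x : ℝ | ∃ N, IsMatchingOn E N ∧ (∀ p ∈ N, p.2 ≠ j) ∧ x = matchWeight b s N} Wj) :
    ((∃ N, IsMatchingOn E N ∧ (∀ p ∈ N, p.1 ≠ i) ∧ matchWeight b s N = Wi ∧
        (∀ p ∈ N, p.2 ≠ j)) →
      Wi = matchWeight b s M - (b i - s j) ∧ Wi - matchWeight b s M + b i = s j) ∧
    ((∃ N, IsMatchingOn E N ∧ (∀ p ∈ N, p.2 ≠ j) ∧ matchWeight b s N = Wj ∧
        (∀ p ∈ N, p.1 ≠ i)) →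
      Wj = matchWeight b s M - (b i - s j) ∧ matchWeight b s M - Wj + s j = b i) :=
  vcg_price_when_partner_uncovered_general E b s M hM hMmax i j hij Wi Wj hWi hWj
end

section
/- Triviality of alternating cycles under uniqueness: let W be a node weight function on a finite graph, and suppose M is the UNIQUE matching of maximum node-based weight (as an edge set, among all matchings of the graph). Then for every matching M' of the graph, the symmetric difference M Δ M' contains no cycle; equivalently, every cycle in the edge set M ∪ M' uses only edges of M ∩ M'. -/
/-!
A cycle of length at least three in `M ∪ M'` cannot have two consecutive edges in the same
matching, so its edges alternate between `M` and `M'` and every vertex of the cycle is covered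
both by an `M`-edge and by an `M'`-edge of the cycle. Swapping the `M`-edges of the cycle for
its `M'`-edges therefore gives a matching covering exactly the vertices covered by `M`, hence of
the same node-based weight. By uniqueness it is `M`, so every edge of the cycle lies in `M`,
contradicting that consecutive edges of the cycle cannot both lie in `M`.
-/

open Finset

/-- The graph is encoded by its finite edge set `G`. -/
def IsGraphMatching {V : Type*} (G : Finset (Sym2 V)) (M : Finset (Sym2 V)) : Prop :=
  M ⊆ G ∧ ∀ e ∈ M, ∀ f ∈ M, e ≠ f → ∀ v : V, v ∈ e → v ∉ f

noncomputable def nodeWeight {V : Type*} [Fintype V] [DecidableEq V] (W : V → ℝ)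
    (M : Finset (Sym2 V)) : ℝ :=
  ∑ v ∈ univ.filter fun v => ∃ e ∈ M, v ∈ e, W v

section Swap

variable {V : Type*} {G M M' C : Finset (Sym2 V)}

theorem IsGraphMatching.eq_of_mem_of_mem (hM : IsGraphMatching G M) {e f : Sym2 V}
    (he : e ∈ M) (hf : f ∈ M) {v : V} (hve : v ∈ e) (hvf : v ∈ f) : e = f :=
  by_contra fun hne => hM.2 e he f hf hne v hve hvf

variable [DecidableEq V]

theorem IsGraphMatching.swap (hM : IsGraphMatching G M) (hM' : IsGraphMatching G M')
    (hC : ∀ e ∈ M' ∩ C, ∀ v ∈ e, ∃ f ∈ M ∩ C, v ∈ f) :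
    IsGraphMatching G (M \ C ∪ M' ∩ C) := by
  refine ⟨union_subset (sdiff_subset.trans hM.1) (inter_subset_left.trans hM'.1), ?_⟩
  have disjoint : ∀ e ∈ M \ C, ∀ f ∈ M' ∩ C, ∀ v ∈ e, v ∉ f := by
    intro e he f hf v hve hvf
    obtain ⟨g, hg, hvg⟩ := hC f hf v hvf
    rw [mem_sdiff] at he
    rw [mem_inter] at hg
    exact he.2 (hM.eq_of_mem_of_mem he.1 hg.1 hve hvg ▸ hg.2)
  intro e he f hf hne v hve
  rcases mem_union.1 he with he | he <;> rcases mem_union.1 hf with hf | hf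
  · exact hM.2 e (mem_sdiff.1 he).1 f (mem_sdiff.1 hf).1 hne v hve
  · exact disjoint e he f hf v hve
  · exact fun hvf => disjoint f hf e he v hvf hve
  · exact hM'.2 e (mem_inter.1 he).1 f (mem_inter.1 hf).1 hne v hve

variable [Fintype V]

theorem nodeWeight_congr (W : V → ℝ) {N : Finset (Sym2 V)}
    (h : ∀ v, (∃ e ∈ N, v ∈ e) ↔ ∃ e ∈ M, v ∈ e) : nodeWeight W N = nodeWeight W M := by
  unfold nodeWeight
  congr 1
  ext v
  simp only [mem_filter, mem_univ, true_and, h]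

theorem nodeWeight_swap (W : V → ℝ)
    (hC : ∀ e ∈ C, ∀ v ∈ e, (∃ f ∈ M ∩ C, v ∈ f) ∧ ∃ f ∈ M' ∩ C, v ∈ f) :
    nodeWeight W (M \ C ∪ M' ∩ C) = nodeWeight W M := by
  refine nodeWeight_congr W fun v => ⟨?_, ?_⟩
  · rintro ⟨e, he, hve⟩
    rcases mem_union.1 he with he | he
    · exact ⟨e, (mem_sdiff.1 he).1, hve⟩
    · obtain ⟨f, hf, hvf⟩ := (hC e (mem_inter.1 he).2 v hve).1
      exact ⟨f, (mem_inter.1 hf).1, hvf⟩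
  · rintro ⟨e, he, hve⟩
    by_cases heC : e ∈ C
    · obtain ⟨f, hf, hvf⟩ := (hC e heC v hve).2
      exact ⟨f, mem_union_right _ hf, hvf⟩
    · exact ⟨e, mem_union_left _ (mem_sdiff.2 ⟨he, heC⟩), hve⟩

end Swap

section Cycle

variable {V : Type*} {k : ℕ} {c : ℕ → V}

def cycleEdge (k : ℕ) (c : ℕ → V) (j : ℕ) : Sym2 V := s(c j, c ((j + 1) % k))

def cycleEdges [DecidableEq V] (k : ℕ) (c : ℕ → V) : Finset (Sym2 V) :=
  (range k).image (cycleEdge k c)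

theorem cycleEdge_mem_cycleEdges [DecidableEq V] {j : ℕ} (hj : j < k) :
    cycleEdge k c j ∈ cycleEdges k c :=
  mem_image_of_mem _ (mem_range.2 hj)

theorem exists_add_one_mod_eq {i : ℕ} (hi : i < k) : ∃ p < k, (p + 1) % k = i := by
  rcases i with _ | i
  · exact ⟨k - 1, by omega, by rw [Nat.sub_add_cancel (by omega), Nat.mod_self]⟩
  · exact ⟨i, by omega, Nat.mod_eq_of_lt hi⟩

theorem add_one_mod_ne_self_and_add_two_mod_ne_self (hk : 3 ≤ k) {j : ℕ} (hj : j < k) :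
    (j + 1) % k ≠ j ∧ ((j + 1) % k + 1) % k ≠ j := by
  rcases Nat.lt_or_ge (j + 1) k with h1 | h1
  · rw [Nat.mod_eq_of_lt h1]
    rcases Nat.lt_or_ge (j + 1 + 1) k with h2 | h2
    · rw [Nat.mod_eq_of_lt h2]
      omega
    · rw [show j + 1 + 1 = k by omega, Nat.mod_self]
      omega
  · rw [show j + 1 = k by omega, Nat.mod_self, Nat.mod_eq_of_lt (by omega : 0 + 1 < k)]
    omega

variable (hk : 3 ≤ k) (hc : ∀ l l', l < k → l' < k → c l = c l' → l = l')
include hk hc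

theorem notMem_cycleEdge_add_one {j : ℕ} (hj : j < k) :
    c j ∉ cycleEdge k c ((j + 1) % k) := by
  have hk0 : 0 < k := by omega
  obtain ⟨h1, h2⟩ := add_one_mod_ne_self_and_add_two_mod_ne_self hk hj
  simp only [cycleEdge, Sym2.mem_iff, not_or]
  exact ⟨fun h => h1 (hc _ _ hj (Nat.mod_lt _ hk0) h).symm,
    fun h => h2 (hc _ _ hj (Nat.mod_lt _ hk0) h).symm⟩

theorem IsGraphMatching.cycleEdge_add_one_notMem {G N : Finset (Sym2 V)}
    (hN : IsGraphMatching G N) {j : ℕ} (hj : j < k) (h : cycleEdge k c j ∈ N) :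
    cycleEdge k c ((j + 1) % k) ∉ N := fun h' =>
  notMem_cycleEdge_add_one hk hc hj <|
    hN.eq_of_mem_of_mem h h' (Sym2.mem_mk_right _ _) (Sym2.mem_mk_left _ _) ▸
      Sym2.mem_mk_left _ _

variable [DecidableEq V] {G M M' : Finset (Sym2 V)}
  (hM : IsGraphMatching G M) (hM' : IsGraphMatching G M')
  (hcyc : ∀ l < k, cycleEdge k c l ∈ M ∪ M')
include hM hM' hcyc

theorem cycle_vertex_covered_by_both {i : ℕ} (hi : i < k) :
    (∃ f ∈ M ∩ cycleEdges k c, c i ∈ f) ∧ ∃ f ∈ M' ∩ cycleEdges k c, c i ∈ f := by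
  obtain ⟨p, hp, rfl⟩ := exists_add_one_mod_eq hi
  have hp' : (p + 1) % k < k := Nat.mod_lt _ (by omega)
  have hC := cycleEdge_mem_cycleEdges (c := c) hp
  have hC' := cycleEdge_mem_cycleEdges (c := c) hp'
  have hin := Sym2.mem_mk_right (c p) (c ((p + 1) % k))
  have hin' := Sym2.mem_mk_left (c ((p + 1) % k)) (c (((p + 1) % k + 1) % k))
  rcases mem_union.1 (hcyc p hp) with h | h
  · have h' := (mem_union.1 (hcyc _ hp')).resolve_left (hM.cycleEdge_add_one_notMem hk hc hp h)
    exact ⟨⟨_, mem_inter.2 ⟨h, hC⟩, hin⟩, ⟨_, mem_inter.2 ⟨h', hC'⟩, hin'⟩⟩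
  · have h' := (mem_union.1 (hcyc _ hp')).resolve_right
      (hM'.cycleEdge_add_one_notMem hk hc hp h)
    exact ⟨⟨_, mem_inter.2 ⟨h', hC'⟩, hin'⟩, ⟨_, mem_inter.2 ⟨h, hC⟩, hin⟩⟩

theorem cycleEdges_alternating :
    ∀ e ∈ cycleEdges k c, ∀ v ∈ e,
      (∃ f ∈ M ∩ cycleEdges k c, v ∈ f) ∧ ∃ f ∈ M' ∩ cycleEdges k c, v ∈ f := by
  intro e he v hv
  obtain ⟨j, hj, rfl⟩ := mem_image.1 he
  rw [mem_range] at hj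
  rcases Sym2.mem_iff.1 hv with rfl | rfl
  · exact cycle_vertex_covered_by_both hk hc hM hM' hcyc hj
  · exact cycle_vertex_covered_by_both hk hc hM hM' hcyc (Nat.mod_lt _ (by omega))

end Cycle

theorem alternating_cycles_trivial_general
    {V : Type*} [Fintype V] [DecidableEq V]
    (G : Finset (Sym2 V))
    (W : V → ℝ) (M : Finset (Sym2 V))
    (hM : IsGraphMatching G M)
    (hMuniq : ∀ N, IsGraphMatching G N → nodeWeight W N = nodeWeight W M → N = M) :
    ∀ M', IsGraphMatching G M' →
      ∀ k : ℕ, 3 ≤ k → ∀ c : ℕ → V,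
        (∀ l l', l < k → l' < k → c l = c l' → l = l') →
        (∀ l < k, s(c l, c ((l + 1) % k)) ∈ M ∪ M') →
        ∀ l < k, s(c l, c ((l + 1) % k)) ∈ M ∩ M' := by
  intro M' hM' k hk c hc hcyc
  exfalso
  have halt := cycleEdges_alternating hk hc hM hM' hcyc
  have hswap : M \ cycleEdges k c ∪ M' ∩ cycleEdges k c = M :=
    hMuniq _ (hM.swap hM' fun e he v hv => (halt e (mem_inter.1 he).2 v hv).1)
      (nodeWeight_swap W halt)
  have hcycM : ∀ l < k, cycleEdge k c l ∈ M := fun l hl =>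
    (mem_union.1 (hcyc l hl)).elim id fun h =>
      hswap ▸ mem_union_right _ (mem_inter.2 ⟨h, cycleEdge_mem_cycleEdges hl⟩)
  have hk0 : 0 < k := by omega
  exact hM.cycleEdge_add_one_notMem hk hc hk0 (hcycM 0 hk0) (hcycM _ (Nat.mod_lt _ hk0))

/-- **Triviality of alternating cycles under uniqueness.** Let `W` be a node weight function
on a finite graph and suppose `M` is the unique matching of maximum node-based weight. Then for
every matching `M'` of the graph, every cycle (a cyclic sequence of `k ≥ 3` distinct vertices
with consecutive edges) in the edge set `M ∪ M'` uses only edges of `M ∩ M'`; equivalently,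
the symmetric difference `M Δ M'` contains no cycle. -/
theorem alternating_cycles_trivial
    {V : Type*} [Fintype V] [DecidableEq V]
    (G : Finset (Sym2 V)) (hG : ∀ e ∈ G, ¬ e.IsDiag)
    (W : V → ℝ) (M : Finset (Sym2 V))
    (hM : IsGraphMatching G M)
    (hMmax : ∀ N, IsGraphMatching G N → nodeWeight W N ≤ nodeWeight W M)
    (hMuniq : ∀ N, IsGraphMatching G N → nodeWeight W N = nodeWeight W M → N = M) :
    ∀ M', IsGraphMatching G M' →
      ∀ k : ℕ, 3 ≤ k → ∀ c : ℕ → V,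
        (∀ l l', l < k → l' < k → c l = c l' → l = l') →
        (∀ l < k, s(c l, c ((l + 1) % k)) ∈ M ∪ M') →
        ∀ l < k, s(c l, c ((l + 1) % k)) ∈ M ∩ M' :=
  alternating_cycles_trivial_general G W M hM hMuniq
end

section
/- Structure of maximal alternating paths under a B-weak-improvement: let G = (B, S, E) be a finite bipartite graph with node weight functions W and W' such that W is a B-weak-improvement of W'. Suppose M is the unique matching of G of maximum node-based weight with respect to W, and M' is the unique matching of G of maximum node-based weight with respect to W'. Then for every maximal alternating path A of M ∪ M' that is not a cycle: (1) it is not the case that both end edges of A belong to M' \ M; and (2) some endpoint of A is a vertex of B whose incident edge on A belongs to M. -/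
/-!
Let `P` be the set of edges of the path. Because the path is maximal and `M ∪ M'` has maximum
degree two, no edge of `M ∪ M'` outside `P` touches `P`, so `(M \ P) ∪ (M' ∩ P)` and
`(M' \ P) ∪ (M ∩ P)` are matchings. Since the path alternates between `M` and `M'`, the weight
gain `Δ V` of the first exchange telescopes to its two endpoints, with coefficient `+1` at an end
whose edge lies only in `M'` and `-1` at an end whose edge lies only in `M`. Optimality of `M`
and `M'` gives `Δ W ≤ 0 ≤ Δ W'`. If (1) or (2) fails, every endpoint either has coefficient `+1`
(and `W' ≤ W` there) or lies in `S` (and `W = W'` there), so `Δ W' ≤ Δ W`. Hence `Δ W = 0`, and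
uniqueness of `M` forces every path edge into `M`: this contradicts the failure of (1) at once,
and for (2) it forces a path of one edge, one of whose ends lies in `B`.
-/

/-- A matching of the bipartite graph with vertex sides `B`, `S` and edge relation `E`:
a finite set of edges (pairs) that are pairwise vertex-disjoint. -/
def IsBipMatching {B S : Type*} (E : B → S → Prop) (M : Finset (B × S)) : Prop :=
  (∀ p ∈ M, E p.1 p.2) ∧
  (∀ p ∈ M, ∀ q ∈ M, p.1 = q.1 → p = q) ∧
  (∀ p ∈ M, ∀ q ∈ M, p.2 = q.2 → p = q)

/-- The node-based weight of a matching for a node weight function `W` on `B ⊕ S`: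
`∑_{(i,j) ∈ M} (W i + W j)`, i.e. the sum of `W` over all covered vertices. -/
noncomputable def bipNodeWeight {B S : Type*} (W : B ⊕ S → ℝ) (M : Finset (B × S)) : ℝ :=
  ∑ p ∈ M, (W (Sum.inl p.1) + W (Sum.inr p.2))

/-- There is an edge of the edge set `M` between the vertices `u` and `v` of `B ⊕ S`. -/
def EdgeBetween {B S : Type*} (M : Finset (B × S)) (u v : B ⊕ S) : Prop :=
  ∃ p ∈ M, (u = Sum.inl p.1 ∧ v = Sum.inr p.2) ∨ (v = Sum.inl p.1 ∧ u = Sum.inr p.2)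

section

open Finset

variable {B S : Type*}

def Incident (p : B × S) (v : B ⊕ S) : Prop :=
  v = .inl p.1 ∨ v = .inr p.2

-- `EdgeBetween M u v` is definitionally `∃ p ∈ M, Joins p u v`.
def Joins (p : B × S) (u v : B ⊕ S) : Prop :=
  (u = .inl p.1 ∧ v = .inr p.2) ∨ (v = .inl p.1 ∧ u = .inr p.2)

def edgeWeight (V : B ⊕ S → ℝ) (p : B × S) : ℝ :=
  V (.inl p.1) + V (.inr p.2)

namespace Joins

variable {p q : B × S} {u v u' v' : B ⊕ S}

theorem symm (h : Joins p u v) : Joins p v u :=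
  Or.symm h

theorem incident_left (h : Joins p u v) : Incident p u := by
  rcases h with ⟨hu, -⟩ | ⟨-, hu⟩ <;> simp [Incident, hu]

theorem incident_right (h : Joins p u v) : Incident p v :=
  h.symm.incident_left

theorem eq_or_eq_of_incident {w : B ⊕ S} (h : Joins p u v) (hw : Incident p w) :
    w = u ∨ w = v := by
  rcases h with ⟨rfl, rfl⟩ | ⟨rfl, rfl⟩ <;> rcases hw with rfl | rfl <;> simp

theorem unique (hp : Joins p u v) (hq : Joins q u v) : p = q := by
  rcases hp with ⟨rfl, hv⟩ | ⟨rfl, hu⟩ <;> rcases hq with ⟨h, h'⟩ | ⟨h, h'⟩ <;>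
    simp_all [Prod.ext_iff]

theorem ends_eq (h : Joins p u v) (h' : Joins p u' v') :
    (u = u' ∧ v = v') ∨ (u = v' ∧ v = u') := by
  rcases h with ⟨rfl, rfl⟩ | ⟨rfl, rfl⟩ <;> rcases h' with ⟨h, h'⟩ | ⟨h, h'⟩ <;> simp_all

theorem edgeWeight_eq (V : B ⊕ S → ℝ) (h : Joins p u v) : edgeWeight V p = V u + V v := by
  rcases h with ⟨rfl, rfl⟩ | ⟨rfl, rfl⟩
  · rfl
  · exact add_comm _ _

end Joins

theorem Incident.exists_joins {p : B × S} {v : B ⊕ S} (h : Incident p v) :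
    ∃ w, Joins p v w := by
  rcases h with rfl | rfl
  · exact ⟨_, Or.inl ⟨rfl, rfl⟩⟩
  · exact ⟨_, Or.inr ⟨rfl, rfl⟩⟩

section Matching

variable {E : B → S → Prop} {M M' P : Finset (B × S)}

theorem IsBipMatching.eq_of_incident (hM : IsBipMatching E M) {p q : B × S} {v : B ⊕ S}
    (hp : p ∈ M) (hq : q ∈ M) (hpv : Incident p v) (hqv : Incident q v) : p = q := by
  rcases hpv with rfl | rfl <;> rcases hqv with h | h
  · exact hM.2.1 p hp q hq (Sum.inl_injective h)
  · exact absurd h Sum.inl_ne_inr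
  · exact absurd h Sum.inr_ne_inl
  · exact hM.2.2 p hp q hq (Sum.inr_injective h)

theorem IsBipMatching.of_incident (hE : ∀ p ∈ M, E p.1 p.2)
    (h : ∀ p ∈ M, ∀ q ∈ M, ∀ v, Incident p v → Incident q v → p = q) : IsBipMatching E M :=
  ⟨hE, fun p hp q hq h₁ => h p hp q hq _ (Or.inl rfl) (Or.inl (congrArg _ h₁)),
    fun p hp q hq h₂ => h p hp q hq _ (Or.inr rfl) (Or.inr (congrArg _ h₂))⟩

def ContainsAdjacent (P X : Finset (B × S)) : Prop :=
  ∀ p ∈ P, ∀ q ∈ X, ∀ v, Incident p v → Incident q v → q ∈ P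

variable [DecidableEq B] [DecidableEq S]

theorem IsBipMatching.swap (hM : IsBipMatching E M) (hM' : IsBipMatching E M')
    (hP : ContainsAdjacent P M) : IsBipMatching E ((M \ P) ∪ (M' ∩ P)) := by
  refine .of_incident (fun p hp => ?_) fun p hp q hq v hpv hqv => ?_
  · rcases mem_union.1 hp with h | h
    exacts [hM.1 p (mem_sdiff.1 h).1, hM'.1 p (mem_inter.1 h).1]
  rcases mem_union.1 hp with hp | hp <;> rcases mem_union.1 hq with hq | hq
  · exact hM.eq_of_incident (mem_sdiff.1 hp).1 (mem_sdiff.1 hq).1 hpv hqv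
  · exact absurd (hP q (mem_inter.1 hq).2 p (mem_sdiff.1 hp).1 v hqv hpv) (mem_sdiff.1 hp).2
  · exact absurd (hP p (mem_inter.1 hp).2 q (mem_sdiff.1 hq).1 v hpv hqv) (mem_sdiff.1 hq).2
  · exact hM'.eq_of_incident (mem_inter.1 hp).1 (mem_inter.1 hq).1 hpv hqv

theorem bipNodeWeight_swap (V : B ⊕ S → ℝ) (M M' P : Finset (B × S)) :
    bipNodeWeight V ((M \ P) ∪ (M' ∩ P)) =
      bipNodeWeight V M - bipNodeWeight V (M ∩ P) + bipNodeWeight V (M' ∩ P) := by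
  have hdisj : Disjoint (M \ P) (M' ∩ P) :=
    disjoint_left.2 fun p hp hp' => (mem_sdiff.1 hp).2 (mem_inter.1 hp').2
  have hsplit := sum_inter_add_sum_sdiff M P (edgeWeight V)
  unfold bipNodeWeight
  rw [sum_union hdisj]
  simp only [edgeWeight] at hsplit
  linarith

theorem weight_inter_le_of_isMax {W : B ⊕ S → ℝ} (hM : IsBipMatching E M)
    (hM' : IsBipMatching E M') (hP : ContainsAdjacent P M)
    (hmax : ∀ N, IsBipMatching E N → bipNodeWeight W N ≤ bipNodeWeight W M) :
    bipNodeWeight W (M' ∩ P) ≤ bipNodeWeight W (M ∩ P) := by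
  have := hmax _ (hM.swap hM' hP)
  rw [bipNodeWeight_swap] at this
  linarith

theorem inter_subset_of_weight_inter_eq {W : B ⊕ S → ℝ} (hM : IsBipMatching E M)
    (hM' : IsBipMatching E M') (hP : ContainsAdjacent P M)
    (huniq : ∀ N, IsBipMatching E N → bipNodeWeight W N = bipNodeWeight W M → N = M)
    (heq : bipNodeWeight W (M' ∩ P) = bipNodeWeight W (M ∩ P)) : M' ∩ P ⊆ M := by
  have hN := huniq _ (hM.swap hM' hP) (by rw [bipNodeWeight_swap, heq]; ring)
  exact hN ▸ subset_union_right

end Matching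

theorem sum_range_mul_add_succ_of_alternating {R : Type*} [CommRing R] (s f : ℕ → R) {k : ℕ}
    (hk : 1 ≤ k) (hs : ∀ l, l + 1 < k → s (l + 1) = -s l) :
    ∑ l ∈ range k, s l * (f l + f (l + 1)) = s 0 * f 0 + s (k - 1) * f k := by
  induction k, hk using Nat.le_induction with
  | base => simp [mul_add]
  | succ n hn ih =>
    obtain ⟨m, rfl⟩ : ∃ m, n = m + 1 := ⟨n - 1, by omega⟩
    rw [sum_range_succ, ih fun l hl => hs l (by omega)]
    simp only [Nat.add_sub_cancel]
    rw [hs m (by omega)]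
    ring

section Exchange

variable [DecidableEq B] [DecidableEq S] (M M' : Finset (B × S))

def exchangeSign (p : B × S) : ℝ :=
  (if p ∈ M' then 1 else 0) - (if p ∈ M then 1 else 0)

theorem sum_exchangeSign_mul_edgeWeight (V : B ⊕ S → ℝ) (P : Finset (B × S)) :
    ∑ p ∈ P, exchangeSign M M' p * edgeWeight V p =
      bipNodeWeight V (M' ∩ P) - bipNodeWeight V (M ∩ P) := by
  simp only [exchangeSign, sub_mul, ite_mul, one_mul, zero_mul, sum_sub_distrib, sum_ite_mem]
  rw [inter_comm P M', inter_comm P M]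
  rfl

variable {M M'}

theorem exchangeSign_eq_neg {E : B → S → Prop} (hM : IsBipMatching E M)
    (hM' : IsBipMatching E M') {p q : B × S} {v : B ⊕ S} (hp : p ∈ M ∪ M') (hq : q ∈ M ∪ M')
    (hpq : p ≠ q) (hpv : Incident p v) (hqv : Incident q v) :
    exchangeSign M M' q = -exchangeSign M M' p := by
  have hM₂ : ¬(p ∈ M ∧ q ∈ M) := fun h => hpq (hM.eq_of_incident h.1 h.2 hpv hqv)
  have hM'₂ : ¬(p ∈ M' ∧ q ∈ M') := fun h => hpq (hM'.eq_of_incident h.1 h.2 hpv hqv)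
  rw [mem_union] at hp hq
  unfold exchangeSign
  by_cases h₁ : p ∈ M <;> by_cases h₂ : p ∈ M' <;> by_cases h₃ : q ∈ M <;>
    by_cases h₄ : q ∈ M' <;> simp_all

theorem exchangeSign_mul_le {W W' : B ⊕ S → ℝ} (hWimp : ∀ i : B, W' (.inl i) ≤ W (.inl i))
    (hWeq : ∀ j : S, W (.inr j) = W' (.inr j)) {p : B × S} {v : B ⊕ S} (hp : p ∈ M ∪ M')
    (hv : p ∈ M → ∀ i, v ≠ .inl i) :
    exchangeSign M M' p * W' v ≤ exchangeSign M M' p * W v := by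
  by_cases hpM : p ∈ M
  · obtain ⟨j, rfl⟩ : ∃ j, v = .inr j := by
      cases v with
      | inl i => exact absurd rfl (hv hpM i)
      | inr j => exact ⟨j, rfl⟩
    rw [hWeq]
  · have hpM' : p ∈ M' := (mem_union.1 hp).resolve_left hpM
    simp only [exchangeSign, hpM, hpM', if_true, if_false, sub_zero, one_mul]
    cases v with
    | inl i => exact hWimp i
    | inr j => exact (hWeq j).ge

end Exchange

section Path

variable {E : B → S → Prop} {M M' : Finset (B × S)}

theorem eq_or_eq_of_incident_union [DecidableEq B] [DecidableEq S] (hM : IsBipMatching E M)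
    (hM' : IsBipMatching E M') {p q r : B × S} {v : B ⊕ S} (hp : p ∈ M ∪ M') (hq : q ∈ M ∪ M')
    (hr : r ∈ M ∪ M') (hpq : p ≠ q) (hpv : Incident p v) (hqv : Incident q v)
    (hrv : Incident r v) : r = p ∨ r = q := by
  by_contra! h
  have hout : ∀ {X}, IsBipMatching E X → r ∈ X → p ∉ X ∧ q ∉ X := fun hX hrX =>
    ⟨fun hpX => h.1 (hX.eq_of_incident hrX hpX hrv hpv),
      fun hqX => h.2 (hX.eq_of_incident hrX hqX hrv hqv)⟩
  rcases mem_union.1 hr with hrX | hrX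
  · obtain ⟨hpM, hqM⟩ := hout hM hrX
    exact hpq (hM'.eq_of_incident ((mem_union.1 hp).resolve_left hpM)
      ((mem_union.1 hq).resolve_left hqM) hpv hqv)
  · obtain ⟨hpM', hqM'⟩ := hout hM' hrX
    exact hpq (hM.eq_of_incident ((mem_union.1 hp).resolve_right hpM')
      ((mem_union.1 hq).resolve_right hqM') hpv hqv)

structure IsMaximalPath (X : Finset (B × S)) (k : ℕ) (c : ℕ → B ⊕ S) (e : ℕ → B × S) :
    Prop where
  one_le : 1 ≤ k
  injOn : ∀ l l', l ≤ k → l' ≤ k → c l = c l' → l = l'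
  mem : ∀ l < k, e l ∈ X
  joins : ∀ l < k, Joins (e l) (c l) (c (l + 1))
  max_start : ∀ v, EdgeBetween X (c 0) v → v = c 1
  max_end : ∀ v, EdgeBetween X (c k) v → v = c (k - 1)

namespace IsMaximalPath

variable {X : Finset (B × S)} {k : ℕ} {c : ℕ → B ⊕ S} {e : ℕ → B × S}

theorem joins_last (hc : IsMaximalPath X k c e) : Joins (e (k - 1)) (c (k - 1)) (c k) := by
  simpa [Nat.sub_add_cancel hc.one_le] using hc.joins (k - 1) (by have := hc.one_le; omega)

theorem edge_injOn (hc : IsMaximalPath X k c e) {l l' : ℕ} (hl : l < k) (hl' : l' < k)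
    (h : e l = e l') : l = l' := by
  rcases (hc.joins l hl).ends_eq (h ▸ hc.joins l' hl') with ⟨h₁, -⟩ | ⟨h₁, h₂⟩
  · exact hc.injOn _ _ hl.le hl'.le h₁
  · have := hc.injOn _ _ hl.le (by omega) h₁
    have := hc.injOn _ _ (by omega) hl'.le h₂
    omega

theorem edge_ne_succ (hc : IsMaximalPath X k c e) {l : ℕ} (hl : l + 1 < k) :
    e l ≠ e (l + 1) := fun h => by
  have := hc.edge_injOn (by omega) hl h
  omega

theorem eq_one_of_forall_mem (hM : IsBipMatching E M) (hc : IsMaximalPath X k c e)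
    (h : ∀ l < k, e l ∈ M) : k = 1 := by
  by_contra hk
  have h₂ : 0 + 1 < k := by have := hc.one_le; omega
  exact hc.edge_ne_succ h₂ (hM.eq_of_incident (h 0 (by omega)) (h 1 h₂)
    (hc.joins 0 (by omega)).incident_right (hc.joins 1 h₂).incident_left)

variable [DecidableEq B] [DecidableEq S]

theorem mem_image_of_incident (hM : IsBipMatching E M) (hM' : IsBipMatching E M')
    (hc : IsMaximalPath (M ∪ M') k c e) {q : B × S} (hq : q ∈ M ∪ M') {l : ℕ} (hl : l ≤ k)
    (hqv : Incident q (c l)) : q ∈ (range k).image e := by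
  have hk := hc.one_le
  obtain ⟨w, hw⟩ := hqv.exists_joins
  rcases l with _ | m
  · obtain rfl := hc.max_start w ⟨q, hq, hw⟩
    exact mem_image.2 ⟨0, mem_range.2 hk, (hw.unique (hc.joins 0 hk)).symm⟩
  obtain rfl | hm := (show m + 1 = k ∨ m + 1 < k by omega)
  · obtain rfl := hc.max_end w ⟨q, hq, hw⟩
    exact mem_image.2 ⟨_, mem_range.2 (by omega), (hw.symm.unique hc.joins_last).symm⟩
  have hm₁ : Incident (e m) (c (m + 1)) := (hc.joins m (by omega)).incident_right
  have hm₂ : Incident (e (m + 1)) (c (m + 1)) := (hc.joins (m + 1) hm).incident_left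
  rcases eq_or_eq_of_incident_union hM hM' (hc.mem m (by omega)) (hc.mem (m + 1) hm) hq
    (hc.edge_ne_succ hm) hm₁ hm₂ hqv with rfl | rfl
  exacts [mem_image_of_mem _ (mem_range.2 (by omega)), mem_image_of_mem _ (mem_range.2 hm)]

theorem containsAdjacent (hM : IsBipMatching E M) (hM' : IsBipMatching E M')
    (hc : IsMaximalPath (M ∪ M') k c e) : ContainsAdjacent ((range k).image e) (M ∪ M') := by
  intro p hp q hq v hpv hqv
  obtain ⟨l, hl, rfl⟩ := mem_image.1 hp
  have hl := mem_range.1 hl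
  rcases (hc.joins l hl).eq_or_eq_of_incident hpv with rfl | rfl
  exacts [hc.mem_image_of_incident hM hM' hq hl.le hqv,
    hc.mem_image_of_incident hM hM' hq hl hqv]

theorem weight_inter_sub_weight_inter (hM : IsBipMatching E M) (hM' : IsBipMatching E M')
    (hc : IsMaximalPath (M ∪ M') k c e) (V : B ⊕ S → ℝ) :
    bipNodeWeight V (M' ∩ (range k).image e) - bipNodeWeight V (M ∩ (range k).image e) =
      exchangeSign M M' (e 0) * V (c 0) + exchangeSign M M' (e (k - 1)) * V (c k) := by
  rw [← sum_exchangeSign_mul_edgeWeight, sum_image fun l hl l' hl' h =>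
    hc.edge_injOn (mem_range.1 hl) (mem_range.1 hl') h]
  rw [sum_congr rfl fun l hl => by rw [(hc.joins l (mem_range.1 hl)).edgeWeight_eq V]]
  exact sum_range_mul_add_succ_of_alternating (fun l => exchangeSign M M' (e l)) (V ∘ c)
    hc.one_le fun l hl => exchangeSign_eq_neg hM hM' (hc.mem l (by omega)) (hc.mem (l + 1) hl)
      (hc.edge_ne_succ hl) (hc.joins l (by omega)).incident_right (hc.joins (l + 1) hl).incident_left

end IsMaximalPath

end Path

theorem IsMaximalPath.forall_mem_of_weakImprovement [DecidableEq B] [DecidableEq S]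
    {E : B → S → Prop} {W W' : B ⊕ S → ℝ} {M M' : Finset (B × S)} {k : ℕ} {c : ℕ → B ⊕ S}
    {e : ℕ → B × S} (hWimp : ∀ i : B, W' (.inl i) ≤ W (.inl i))
    (hWeq : ∀ j : S, W (.inr j) = W' (.inr j))
    (hM : IsBipMatching E M) (hM' : IsBipMatching E M')
    (hMmax : ∀ N, IsBipMatching E N → bipNodeWeight W N ≤ bipNodeWeight W M)
    (hMuniq : ∀ N, IsBipMatching E N → bipNodeWeight W N = bipNodeWeight W M → N = M)
    (hM'max : ∀ N, IsBipMatching E N → bipNodeWeight W' N ≤ bipNodeWeight W' M')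
    (hc : IsMaximalPath (M ∪ M') k c e) (h₀ : e 0 ∈ M → ∀ i, c 0 ≠ .inl i)
    (hₖ : e (k - 1) ∈ M → ∀ i, c k ≠ .inl i) : ∀ l < k, e l ∈ M := by
  set P := (range k).image e
  have hP := hc.containsAdjacent hM hM'
  have hPM : ContainsAdjacent P M := fun p hp q hq => hP p hp q (mem_union_left _ hq)
  have hPM' : ContainsAdjacent P M' := fun p hp q hq => hP p hp q (mem_union_right _ hq)
  have hW := weight_inter_le_of_isMax hM hM' hPM hMmax
  have hW' := weight_inter_le_of_isMax hM' hM hPM' hM'max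
  have hΔ := hc.weight_inter_sub_weight_inter hM hM' W
  have hΔ' := hc.weight_inter_sub_weight_inter hM hM' W'
  have hstart := exchangeSign_mul_le hWimp hWeq (hc.mem 0 hc.one_le) h₀
  have hend := exchangeSign_mul_le hWimp hWeq (hc.mem (k - 1) (by have := hc.one_le; omega)) hₖ
  have hsub : M' ∩ P ⊆ M := inter_subset_of_weight_inter_eq hM hM' hPM hMuniq (by linarith)
  intro l hl
  exact (mem_union.1 (hc.mem l hl)).elim id fun h =>
    hsub (mem_inter.2 ⟨h, mem_image_of_mem _ (mem_range.2 hl)⟩)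

end

theorem alternating_path_structure_general
    {B S : Type*} [DecidableEq B] [DecidableEq S]
    (E : B → S → Prop) (W W' : B ⊕ S → ℝ)
    (hWimp : ∀ i : B, W' (Sum.inl i) ≤ W (Sum.inl i))
    (hWeq : ∀ j : S, W (Sum.inr j) = W' (Sum.inr j))
    (M M' : Finset (B × S))
    (hM : IsBipMatching E M) (hM' : IsBipMatching E M')
    (hMmax : ∀ N, IsBipMatching E N → bipNodeWeight W N ≤ bipNodeWeight W M)
    (hMuniq : ∀ N, IsBipMatching E N → bipNodeWeight W N = bipNodeWeight W M → N = M)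
    (hM'max : ∀ N, IsBipMatching E N → bipNodeWeight W' N ≤ bipNodeWeight W' M')
    (k : ℕ) (hk : 1 ≤ k) (c : ℕ → B ⊕ S)
    (hinj : ∀ l l', l ≤ k → l' ≤ k → c l = c l' → l = l')
    (hpath : ∀ l < k, EdgeBetween (M ∪ M') (c l) (c (l + 1)))
    (hmax0 : ∀ v, EdgeBetween (M ∪ M') (c 0) v → v = c 1)
    (hmaxk : ∀ v, EdgeBetween (M ∪ M') (c k) v → v = c (k - 1)) :
    (¬ ((EdgeBetween M' (c 0) (c 1) ∧ ¬ EdgeBetween M (c 0) (c 1)) ∧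
        (EdgeBetween M' (c (k - 1)) (c k) ∧ ¬ EdgeBetween M (c (k - 1)) (c k)))) ∧
    ((∃ i : B, c 0 = Sum.inl i ∧ EdgeBetween M (c 0) (c 1)) ∨
      (∃ i : B, c k = Sum.inl i ∧ EdgeBetween M (c k) (c (k - 1)))) := by
  have : Nonempty (B × S) := (hpath 0 hk).nonempty
  choose! e he₁ he₂ using hpath
  have hc : IsMaximalPath (M ∪ M') k c e := ⟨hk, hinj, he₁, he₂, hmax0, hmaxk⟩
  have hmem := hc.forall_mem_of_weakImprovement hWimp hWeq hM hM' hMmax hMuniq hM'max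
  constructor
  · rintro ⟨⟨-, h₀⟩, -, hₖ⟩
    have h := hmem (fun h => absurd ⟨_, h, hc.joins 0 hk⟩ h₀)
      (fun h => absurd ⟨_, h, hc.joins_last⟩ hₖ) 0 hk
    exact h₀ ⟨_, h, hc.joins 0 hk⟩
  · by_contra! h
    obtain ⟨h₀, hₖ⟩ := h
    have hall := hmem (fun h i hi => h₀ i hi ⟨_, h, hc.joins 0 hk⟩)
      (fun h i hi => hₖ i hi ⟨_, h, hc.joins_last.symm⟩)
    obtain rfl := hc.eq_one_of_forall_mem hM hall
    rcases hc.joins 0 hk with ⟨h, -⟩ | ⟨h, -⟩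
    · exact h₀ _ h ⟨_, hall 0 hk, hc.joins 0 hk⟩
    · exact hₖ _ h ⟨_, hall 0 hk, (hc.joins 0 hk).symm⟩

/-- **Structure of maximal alternating paths under a `B`-weak-improvement.**
Let `W, W'` be node weight functions on the bipartite graph `(B, S, E)` with `W` a
`B`-weak-improvement of `W'` (`W ≥ W'` on `B`, `W = W'` on `S`). Suppose `M` is the unique
matching of maximum node-based weight w.r.t. `W` and `M'` is the unique matching of maximum
node-based weight w.r.t. `W'`. Then for every maximal alternating path
`c 0, c 1, ..., c k` of `M ∪ M'` that is not a cycle (distinct vertices, consecutive edges in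
`M ∪ M'`, not extendable at either endpoint): (1) it is not the case that both end edges
belong to `M' \ M`; and (2) some endpoint is a vertex of `B` whose incident path edge
belongs to `M`. -/
theorem alternating_path_structure
    {B S : Type*} [Fintype B] [Fintype S] [DecidableEq B] [DecidableEq S]
    (E : B → S → Prop) (W W' : B ⊕ S → ℝ)
    (hWimp : ∀ i : B, W' (Sum.inl i) ≤ W (Sum.inl i))
    (hWeq : ∀ j : S, W (Sum.inr j) = W' (Sum.inr j))
    (M M' : Finset (B × S))
    (hM : IsBipMatching E M) (hM' : IsBipMatching E M')
    (hMmax : ∀ N, IsBipMatching E N → bipNodeWeight W N ≤ bipNodeWeight W M)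
    (hMuniq : ∀ N, IsBipMatching E N → bipNodeWeight W N = bipNodeWeight W M → N = M)
    (hM'max : ∀ N, IsBipMatching E N → bipNodeWeight W' N ≤ bipNodeWeight W' M')
    (hM'uniq : ∀ N, IsBipMatching E N → bipNodeWeight W' N = bipNodeWeight W' M' → N = M')
    (k : ℕ) (hk : 1 ≤ k) (c : ℕ → B ⊕ S)
    (hinj : ∀ l l', l ≤ k → l' ≤ k → c l = c l' → l = l')
    (hpath : ∀ l < k, EdgeBetween (M ∪ M') (c l) (c (l + 1)))
    (hmax0 : ∀ v, EdgeBetween (M ∪ M') (c 0) v → v = c 1)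
    (hmaxk : ∀ v, EdgeBetween (M ∪ M') (c k) v → v = c (k - 1)) :
    (¬ ((EdgeBetween M' (c 0) (c 1) ∧ ¬ EdgeBetween M (c 0) (c 1)) ∧
        (EdgeBetween M' (c (k - 1)) (c k) ∧ ¬ EdgeBetween M (c (k - 1)) (c k)))) ∧
    ((∃ i : B, c 0 = Sum.inl i ∧ EdgeBetween M (c 0) (c 1)) ∨
      (∃ i : B, c k = Sum.inl i ∧ EdgeBetween M (c k) (c (k - 1)))) :=
  alternating_path_structure_general E W W' hWimp hWeq M M' hM hM' hMmax hMuniq hM'max k hk c hinj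
    hpath hmax0 hmaxk
end

section
/- Internal sellers of alternating paths remain matched after removing their partner: let G = (B, S, E) be a finite bipartite graph, b : B → ℝ and s : S → ℝ, and define node weights W(i) = b_i and W(j) = −s_j, and W₁(i) = φ_i and W₁(j) = −s_j, where φ_i ≤ b_i for every buyer i. Suppose M is the unique matching of maximum node-based weight with respect to W, M₁ is the unique matching of maximum node-based weight with respect to W₁, and for every buyer i the matching of maximum node-based weight with respect to W among matchings leaving i uncovered is unique. Let A be a maximal alternating path of M ∪ M₁ that is not a cycle, let j ∈ S be a seller on A that is not an endpoint of A, and let i be the buyer with (i,j) ∈ M. Then j is covered by the maximum-weight (with respect to W) matching among matchings leaving i uncovered. -/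
/-!
Walk from `i` through `j` along `A`, away from `i`, to the end of `A`, and let `X ∋ (i, j)` and `Y`
be the `M`- and the `M₁`-edges of this half-path. If `Mminus i` missed `j`, then `M \ X ∪ Y` would
be a matching avoiding `i` and covering `j`, hence lighter than `Mminus i`, which weighs at most
`W(M) - W(i) - W(j)` because adding `(i, j)` to it gives a matching; so `W(Y) < W(X - (i, j))`.
Likewise `M₁ \ Y ∪ (X - (i, j))` is a matching other than `M₁`, so `W₁(X - (i, j)) < W₁(Y)`.
Sellers weigh the same under `W` and `W₁`, so adding up gives
`∑_{X - (i, j)} (b - φ) > ∑_Y (b - φ)`, whereas every buyer of `X - (i, j)` is a buyer of `Y` and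
`b - φ ≥ 0`. Both exchanges are matchings because the half-path ends at a vertex that the matching
avoided by its last edge does not cover.
-/

def SharesVertex {B S : Type*} (p q : B × S) : Prop :=
  p.1 = q.1 ∨ p.2 = q.2

theorem SharesVertex.symm {B S : Type*} {p q : B × S} (h : SharesVertex p q) :
    SharesVertex q p :=
  h.imp Eq.symm Eq.symm

section Matchings

variable {B S : Type*} {E : B → S → Prop} {M N N₁ N₂ X Y : Finset (B × S)}

theorem isBipMatching_iff :
    IsBipMatching E N ↔
      (∀ p ∈ N, E p.1 p.2) ∧ ∀ p ∈ N, ∀ q ∈ N, SharesVertex p q → p = q :=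
  and_congr_right fun _ =>
    ⟨fun h p hp q hq hpq => hpq.elim (h.1 p hp q hq) (h.2 p hp q hq),
      fun h => ⟨fun p hp q hq hpq => h p hp q hq (Or.inl hpq),
        fun p hp q hq hpq => h p hp q hq (Or.inr hpq)⟩⟩

namespace IsBipMatching

theorem eq_of_sharesVertex (hN : IsBipMatching E N) {p q : B × S} (hp : p ∈ N) (hq : q ∈ N)
    (h : SharesVertex p q) : p = q :=
  (isBipMatching_iff.1 hN).2 p hp q hq h

theorem mono (hN : IsBipMatching E N) (h : M ⊆ N) : IsBipMatching E M :=
  isBipMatching_iff.2 ⟨fun p hp => hN.1 p (h hp),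
    fun _ hp _ hq => hN.eq_of_sharesVertex (h hp) (h hq)⟩

theorem injOn_fst (hN : IsBipMatching E N) : Set.InjOn Prod.fst (N : Set (B × S)) :=
  fun _ hp _ hq h => hN.2.1 _ hp _ hq h

theorem union [DecidableEq B] [DecidableEq S] (h₁ : IsBipMatching E N₁)
    (h₂ : IsBipMatching E N₂) (h : ∀ p ∈ N₁, ∀ q ∈ N₂, ¬SharesVertex p q) :
    IsBipMatching E (N₁ ∪ N₂) := by
  refine isBipMatching_iff.2 ⟨fun p hp => ?_, fun p hp q hq hpq => ?_⟩
  · rcases Finset.mem_union.1 hp with hp | hp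
    exacts [h₁.1 p hp, h₂.1 p hp]
  · rcases Finset.mem_union.1 hp with hp | hp <;> rcases Finset.mem_union.1 hq with hq | hq
    · exact h₁.eq_of_sharesVertex hp hq hpq
    · exact absurd hpq (h p hp q hq)
    · exact absurd hpq.symm (h q hq p hp)
    · exact h₂.eq_of_sharesVertex hp hq hpq

theorem insert [DecidableEq B] [DecidableEq S] (hN : IsBipMatching E N) {x : B} {y : S}
    (hxy : E x y) (hx : ∀ q ∈ N, q.1 ≠ x) (hy : ∀ q ∈ N, q.2 ≠ y) :
    IsBipMatching E (insert (x, y) N) := by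
  rw [Finset.insert_eq]
  refine union (isBipMatching_iff.2 ⟨?_, ?_⟩) hN ?_
  · simpa using hxy
  · simp
  · simp only [Finset.mem_singleton, forall_eq]
    exact fun q hq h => h.elim (hx q hq ·.symm) (hy q hq ·.symm)

theorem sdiff_union [DecidableEq B] [DecidableEq S] (hN : IsBipMatching E N)
    (hY : IsBipMatching E Y) (hXY : ∀ q ∈ N, ∀ y ∈ Y, SharesVertex q y → q ∈ X) :
    IsBipMatching E (N \ X ∪ Y) :=
  union (hN.mono Finset.sdiff_subset) hY fun q hq y hy h =>
    (Finset.mem_sdiff.1 hq).2 (hXY q (Finset.mem_sdiff.1 hq).1 y hy h)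

end IsBipMatching

theorem bipNodeWeight_erase_add [DecidableEq B] [DecidableEq S] (W : B ⊕ S → ℝ)
    {p : B × S} (hp : p ∈ N) :
    bipNodeWeight W (N.erase p) + (W (.inl p.1) + W (.inr p.2)) = bipNodeWeight W N :=
  Finset.sum_erase_add N _ hp

theorem bipNodeWeight_sdiff_union_add [DecidableEq B] [DecidableEq S] (W : B ⊕ S → ℝ)
    (hX : X ⊆ N) (hXY : ∀ q ∈ N, ∀ y ∈ Y, SharesVertex q y → q ∈ X) :
    bipNodeWeight W (N \ X ∪ Y) + bipNodeWeight W X = bipNodeWeight W N + bipNodeWeight W Y := by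
  have hdisj : Disjoint (N \ X) Y := Finset.disjoint_left.2 fun q hq hqY =>
    (Finset.mem_sdiff.1 hq).2 (hXY q (Finset.mem_sdiff.1 hq).1 q hqY (Or.inl rfl))
  unfold bipNodeWeight
  rw [Finset.sum_union hdisj, add_right_comm, Finset.sum_sdiff hX]

theorem bipNodeWeight_elim (f : B → ℝ) (g : S → ℝ) (N : Finset (B × S)) :
    bipNodeWeight (Sum.elim f g) N = ∑ p ∈ N, f p.1 + ∑ p ∈ N, g p.2 :=
  Finset.sum_add_distrib

theorem sum_fst_le_sum_fst [DecidableEq B] {g : B → ℝ} (hg : ∀ x, 0 ≤ g x)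
    (hX : Set.InjOn Prod.fst (X : Set (B × S))) (hY : Set.InjOn Prod.fst (Y : Set (B × S)))
    (h : ∀ x ∈ X, ∃ y ∈ Y, y.1 = x.1) :
    ∑ x ∈ X, g x.1 ≤ ∑ y ∈ Y, g y.1 := by
  rw [← Finset.sum_image hX, ← Finset.sum_image hY]
  refine Finset.sum_le_sum_of_subset_of_nonneg (fun b hb => ?_) fun _ _ _ => hg _
  obtain ⟨x, hx, rfl⟩ := Finset.mem_image.1 hb
  obtain ⟨y, hy, hyx⟩ := h x hx
  exact Finset.mem_image.2 ⟨y, hy, hyx⟩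

end Matchings

section Exchange

variable {B S : Type*} [DecidableEq B] [DecidableEq S] {E : B → S → Prop} {W : B ⊕ S → ℝ}
  {M X Y Z : Finset (B × S)}

theorem bipNodeWeight_lt_of_exchange (hM : IsBipMatching E M)
    (hmax : ∀ N, IsBipMatching E N → bipNodeWeight W N ≤ bipNodeWeight W M)
    (huniq : ∀ N, IsBipMatching E N → bipNodeWeight W N = bipNodeWeight W M → N = M)
    (hZ : IsBipMatching E Z) (hYM : Y ⊆ M)
    (hYZ : ∀ q ∈ M, ∀ z ∈ Z, SharesVertex q z → q ∈ Y) (hY : ¬Y ⊆ Z) :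
    bipNodeWeight W Z < bipNodeWeight W Y := by
  have hN := hM.sdiff_union hZ hYZ
  have hne : M \ Y ∪ Z ≠ M := fun h => hY fun y hy => by
    have hyN : y ∈ M \ Y ∪ Z := h.symm ▸ hYM hy
    simpa [hy] using hyN
  have hlt := lt_of_le_of_ne (hmax _ hN) fun h => hne (huniq _ hN h)
  linarith [bipNodeWeight_sdiff_union_add W hYM hYZ]

theorem bipNodeWeight_add_le_of_isMax
    (hmax : ∀ N, IsBipMatching E N → bipNodeWeight W N ≤ bipNodeWeight W M)
    {N : Finset (B × S)} (hN : IsBipMatching E N) {x : B} {y : S} (hxy : E x y)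
    (hx : ∀ q ∈ N, q.1 ≠ x) (hy : ∀ q ∈ N, q.2 ≠ y) :
    bipNodeWeight W N + (W (.inl x) + W (.inr y)) ≤ bipNodeWeight W M := by
  have hle := hmax _ (hN.insert hxy hx hy)
  rwa [bipNodeWeight, Finset.sum_insert fun h => hx _ h rfl, add_comm] at hle

theorem bipNodeWeight_lt_erase_of_exchange {i : B} {j : S} (hM : IsBipMatching E M)
    (hMmax : ∀ N, IsBipMatching E N → bipNodeWeight W N ≤ bipNodeWeight W M)
    {Mi : Finset (B × S)} (hMi : IsBipMatching E Mi) (hMi_i : ∀ q ∈ Mi, q.1 ≠ i)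
    (hMimax : ∀ N, IsBipMatching E N → (∀ q ∈ N, q.1 ≠ i) →
      bipNodeWeight W N ≤ bipNodeWeight W Mi)
    (hMiuniq : ∀ N, IsBipMatching E N → (∀ q ∈ N, q.1 ≠ i) →
      bipNodeWeight W N = bipNodeWeight W Mi → N = Mi)
    (hMi_j : ∀ q ∈ Mi, q.2 ≠ j)
    (hY : IsBipMatching E Y) (hXM : X ⊆ M) (hijX : (i, j) ∈ X)
    (hXY : ∀ q ∈ M, ∀ y ∈ Y, SharesVertex q y → q ∈ X)
    (hY_i : ∀ y ∈ Y, y.1 ≠ i) (hY_j : ∃ y ∈ Y, y.2 = j) :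
    bipNodeWeight W Y < bipNodeWeight W (X.erase (i, j)) := by
  have hN := hM.sdiff_union hY hXY
  have hN_i : ∀ q ∈ M \ X ∪ Y, q.1 ≠ i := by
    intro q hq hqi
    rcases Finset.mem_union.1 hq with hq | hq
    · obtain ⟨hqM, hqX⟩ := Finset.mem_sdiff.1 hq
      exact hqX (hM.eq_of_sharesVertex hqM (hXM hijX) (Or.inl hqi) ▸ hijX)
    · exact hY_i q hq hqi
  have hne : M \ X ∪ Y ≠ Mi := by
    obtain ⟨y, hy, hyj⟩ := hY_j
    exact fun h => hMi_j y (h ▸ Finset.mem_union_right _ hy) hyj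
  have hlt := lt_of_le_of_ne (hMimax _ hN hN_i) fun h => hne (hMiuniq _ hN hN_i h)
  linarith [bipNodeWeight_sdiff_union_add W hXM hXY, bipNodeWeight_erase_add W hijX,
    bipNodeWeight_add_le_of_isMax hMmax hMi (hM.1 _ (hXM hijX)) hMi_i hMi_j]

end Exchange

section Paths

variable {B S : Type*} {F M M₁ : Finset (B × S)}

theorem EdgeBetween.symm {u v : B ⊕ S} (h : EdgeBetween F u v) : EdgeBetween F v u :=
  let ⟨p, hp, h⟩ := h
  ⟨p, hp, h.symm⟩

theorem edgeBetween_inl_iff {x : B} {v : B ⊕ S} :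
    EdgeBetween F (.inl x) v ↔ ∃ y, v = .inr y ∧ (x, y) ∈ F := by
  constructor
  · rintro ⟨p, hp, ⟨hx, rfl⟩ | ⟨-, h⟩⟩
    · exact ⟨p.2, rfl, by rwa [Sum.inl_injective hx]⟩
    · cases h
  · rintro ⟨y, rfl, h⟩
    exact ⟨(x, y), h, Or.inl ⟨rfl, rfl⟩⟩

theorem edgeBetween_inr_iff {y : S} {v : B ⊕ S} :
    EdgeBetween F (.inr y) v ↔ ∃ x, v = .inl x ∧ (x, y) ∈ F := by
  constructor
  · rintro ⟨p, hp, ⟨h, -⟩ | ⟨rfl, hy⟩⟩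
    · cases h
    · exact ⟨p.1, rfl, by rwa [Sum.inr_injective hy]⟩
  · rintro ⟨x, rfl, h⟩
    exact ⟨(x, y), h, Or.inr ⟨rfl, rfl⟩⟩

theorem edgeBetween_inl_inr {x : B} {y : S} : EdgeBetween F (.inl x) (.inr y) ↔ (x, y) ∈ F := by
  simp [edgeBetween_inl_iff]

theorem edgeBetween_inr_inl {x : B} {y : S} : EdgeBetween F (.inr y) (.inl x) ↔ (x, y) ∈ F := by
  simp [edgeBetween_inr_iff]

structure IsPathToLeaf (F : Finset (B × S)) (d : ℕ → B ⊕ S) (n : ℕ) : Prop where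
  injOn : Set.InjOn d (Set.Iic n)
  adj : ∀ t < n, EdgeBetween F (d t) (d (t + 1))
  leaf : ∀ v, EdgeBetween F (d n) v → v = d (n - 1)

section MaximalPath

variable {k : ℕ} {c : ℕ → B ⊕ S} (hinj : ∀ a a', a ≤ k → a' ≤ k → c a = c a' → a = a')
  (hpath : ∀ a < k, EdgeBetween F (c a) (c (a + 1)))
include hinj hpath

theorem isPathToLeaf_shift (hmaxk : ∀ v, EdgeBetween F (c k) v → v = c (k - 1)) {a : ℕ}
    (ha : a < k) : IsPathToLeaf F (fun t => c (a + t)) (k - a) where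
  injOn t ht t' ht' h := by
    have := hinj (a + t) (a + t') (by simp at ht; omega) (by simp at ht'; omega) h
    omega
  adj t ht := hpath (a + t) (by omega)
  leaf v hv := by
    rw [show a + (k - a) = k by omega] at hv
    rw [hmaxk v hv, show a + (k - a - 1) = k - 1 by omega]

theorem isPathToLeaf_reverse (hmax0 : ∀ v, EdgeBetween F (c 0) v → v = c 1) {a : ℕ}
    (ha : 0 < a) (hak : a ≤ k) : IsPathToLeaf F (fun t => c (a - t)) a where
  injOn t ht t' ht' h := by
    have := hinj (a - t) (a - t') (by omega) (by omega) h
    simp at ht ht'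
    omega
  adj t ht := by
    have h := hpath (a - (t + 1)) (by omega)
    rw [show a - (t + 1) + 1 = a - t by omega] at h
    exact h.symm
  leaf v hv := by
    rw [Nat.sub_self] at hv
    rw [hmax0 v hv, show a - (a - 1) = 1 by omega]

end MaximalPath

/-- On a simple path in `M ∪ M₁`, an interior seller `j` has two distinct buyers as neighbours,
at most one of them through `M₁`; so its `M`-partner is one of them. -/
theorem partner_adjacent_of_interior [DecidableEq B] [DecidableEq S] {E : B → S → Prop}
    (hM : IsBipMatching E M) (hM₁ : IsBipMatching E M₁) {k : ℕ} {c : ℕ → B ⊕ S}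
    (hinj : ∀ a a', a ≤ k → a' ≤ k → c a = c a' → a = a')
    (hpath : ∀ a < k, EdgeBetween (M ∪ M₁) (c a) (c (a + 1)))
    {l : ℕ} (hl : 0 < l) (hlk : l < k) {i : B} {j : S} (hcl : c l = .inr j) (hij : (i, j) ∈ M) :
    c (l + 1) = .inl i ∨ c (l - 1) = .inl i := by
  have hnext := hpath l hlk
  have hprev := hpath (l - 1) (by omega)
  rw [hcl] at hnext
  rw [Nat.sub_add_cancel hl, hcl] at hprev
  obtain ⟨x, hx, hxj⟩ := edgeBetween_inr_iff.1 hnext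
  obtain ⟨x', hx', hx'j⟩ := edgeBetween_inr_iff.1 hprev.symm
  have hxx' : x ≠ x' := by
    rintro rfl
    have := hinj (l + 1) (l - 1) (by omega) (by omega) (hx.trans hx'.symm)
    omega
  rcases Finset.mem_union.1 hxj with hxj | hxj
  · obtain ⟨rfl, -⟩ := Prod.mk.inj (hM.eq_of_sharesVertex hxj hij (Or.inr rfl))
    exact .inl hx
  rcases Finset.mem_union.1 hx'j with hx'j | hx'j
  · obtain ⟨rfl, -⟩ := Prod.mk.inj (hM.eq_of_sharesVertex hx'j hij (Or.inr rfl))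
    exact .inr hx'
  exact absurd (Prod.mk.inj (hM₁.eq_of_sharesVertex hxj hx'j (Or.inr rfl))).1 hxx'

end Paths

section HalfPath

variable {B S : Type*} {E : B → S → Prop} {M M₁ : Finset (B × S)} {β : ℕ → B} {σ : ℕ → S}
  {n : ℕ}

/-- The path `β 0, σ 0, β 1, σ 1, …` with `n + 1` vertices, whose edges `(β u, σ u)` lie in `M`
and `(β (u + 1), σ u)` in `M₁`; its last vertex is not covered by the other matching. -/
structure IsAltHalfPath (M M₁ : Finset (B × S)) (β : ℕ → B) (σ : ℕ → S) (n : ℕ) : Prop where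
  mem_left : ∀ u, 2 * u + 1 ≤ n → (β u, σ u) ∈ M
  mem_right : ∀ u, 2 * u + 2 ≤ n → (β (u + 1), σ u) ∈ M₁
  injOn_buyer : Set.InjOn β {u | 2 * u ≤ n}
  injOn_seller : Set.InjOn σ {u | 2 * u + 1 ≤ n}
  end_buyer : ∀ u, 2 * u = n → ∀ q ∈ M, q.1 ≠ β u
  end_seller : ∀ u, 2 * u + 1 = n → ∀ q ∈ M₁, q.2 ≠ σ u

theorem exists_buyer_seller [Nonempty S] {F : Finset (B × S)} {d : ℕ → B ⊕ S}
    (hadj : ∀ t < n, EdgeBetween F (d t) (d (t + 1))) {i : B} (h0 : d 0 = .inl i) :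
    ∃ (β : ℕ → B) (σ : ℕ → S), (∀ u, 2 * u ≤ n → d (2 * u) = .inl (β u)) ∧
      ∀ u, 2 * u + 1 ≤ n → d (2 * u + 1) = .inr (σ u) := by
  have hseller : ∀ u x, 2 * u + 1 ≤ n → d (2 * u) = .inl x → ∃ y, d (2 * u + 1) = .inr y :=
    fun u x hu hx => by
      obtain ⟨y, hy, -⟩ := edgeBetween_inl_iff.1 (hx ▸ hadj (2 * u) (by omega))
      exact ⟨y, hy⟩
  have hbuyer : ∀ u, 2 * u ≤ n → ∃ x, d (2 * u) = .inl x := by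
    intro u
    induction u with
    | zero => exact fun _ => ⟨i, h0⟩
    | succ u ih =>
      intro hu
      obtain ⟨x, hx⟩ := ih (by omega)
      obtain ⟨y, hy⟩ := hseller u x (by omega) hx
      obtain ⟨x', hx', -⟩ := edgeBetween_inr_iff.1 (hy ▸ hadj (2 * u + 1) (by omega))
      exact ⟨x', hx'⟩
  have : Nonempty B := ⟨i⟩
  choose! β hβ using hbuyer
  choose! σ hσ using fun u hu => hseller u (β u) hu (hβ u (by omega))
  exact ⟨β, σ, hβ, hσ⟩

/-- Two consecutive edges of a simple path share a vertex and are distinct, so they cannot lie in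
the same matching: the edges of a path in `M ∪ M₁` starting with an `M`-edge alternate. -/
theorem alternating_of_mem_union [DecidableEq B] [DecidableEq S] (hM : IsBipMatching E M)
    (hM₁ : IsBipMatching E M₁) (hleft : ∀ u, 2 * u + 1 ≤ n → (β u, σ u) ∈ M ∪ M₁)
    (hright : ∀ u, 2 * u + 2 ≤ n → (β (u + 1), σ u) ∈ M ∪ M₁)
    (hβ : Set.InjOn β {u | 2 * u ≤ n}) (hσ : Set.InjOn σ {u | 2 * u + 1 ≤ n})
    (h0 : (β 0, σ 0) ∈ M) (u : ℕ) :
    (2 * u + 1 ≤ n → (β u, σ u) ∈ M) ∧ (2 * u + 2 ≤ n → (β (u + 1), σ u) ∈ M₁) := by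
  have step_right : ∀ u, 2 * u + 2 ≤ n → (β u, σ u) ∈ M → (β (u + 1), σ u) ∈ M₁ :=
    fun u hu h => (Finset.mem_union.1 (hright u hu)).resolve_left fun h' => by
      have := hβ (show 2 * u ≤ n by omega) (show 2 * (u + 1) ≤ n by omega)
        (Prod.mk.inj (hM.eq_of_sharesVertex h h' (Or.inr rfl))).1
      omega
  have step_left : ∀ u, 2 * u + 3 ≤ n → (β (u + 1), σ u) ∈ M₁ → (β (u + 1), σ (u + 1)) ∈ M :=
    fun u hu h => (Finset.mem_union.1 (hleft (u + 1) (by omega))).resolve_right fun h' => by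
      have := hσ (show 2 * u + 1 ≤ n by omega) (show 2 * (u + 1) + 1 ≤ n by omega)
        (Prod.mk.inj (hM₁.eq_of_sharesVertex h h' (Or.inl rfl))).2
      omega
  induction u with
  | zero => exact ⟨fun _ => h0, fun h => step_right 0 h h0⟩
  | succ u ih =>
    have hleft' : 2 * (u + 1) + 1 ≤ n → (β (u + 1), σ (u + 1)) ∈ M :=
      fun h => step_left u (by omega) (ih.2 (by omega))
    exact ⟨hleft', fun h => step_right (u + 1) h (hleft' (by omega))⟩

theorem IsPathToLeaf.exists_isAltHalfPath [DecidableEq B] [DecidableEq S]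
    (hM : IsBipMatching E M) (hM₁ : IsBipMatching E M₁) {d : ℕ → B ⊕ S}
    (hd : IsPathToLeaf (M ∪ M₁) d n) (hn : 2 ≤ n) {i : B} {j : S} (h0 : d 0 = .inl i)
    (h1 : d 1 = .inr j) (hij : (i, j) ∈ M) :
    ∃ β σ, β 0 = i ∧ σ 0 = j ∧ IsAltHalfPath M M₁ β σ n := by
  have : Nonempty S := ⟨j⟩
  obtain ⟨β, σ, hβ, hσ⟩ := exists_buyer_seller hd.adj h0
  have hβ0 : β 0 = i := Sum.inl_injective ((hβ 0 (by omega)).symm.trans h0)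
  have hσ0 : σ 0 = j := Sum.inr_injective ((hσ 0 (by omega)).symm.trans h1)
  have injβ : Set.InjOn β {u | 2 * u ≤ n} := fun u hu u' hu' h => by
    have := hd.injOn (Set.mem_Iic.2 hu) (Set.mem_Iic.2 hu') (by rw [hβ u hu, hβ u' hu', h])
    omega
  have injσ : Set.InjOn σ {u | 2 * u + 1 ≤ n} := fun u hu u' hu' h => by
    have := hd.injOn (Set.mem_Iic.2 hu) (Set.mem_Iic.2 hu') (by rw [hσ u hu, hσ u' hu', h])
    omega
  have hleft : ∀ u, 2 * u + 1 ≤ n → (β u, σ u) ∈ M ∪ M₁ := fun u hu => by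
    simpa [hβ u (by omega), hσ u hu, edgeBetween_inl_inr] using hd.adj (2 * u) (by omega)
  have hright : ∀ u, 2 * u + 2 ≤ n → (β (u + 1), σ u) ∈ M ∪ M₁ := fun u hu => by
    have h := hd.adj (2 * u + 1) (by omega)
    rwa [hσ u (by omega), show 2 * u + 1 + 1 = 2 * (u + 1) by ring, hβ (u + 1) (by omega),
      edgeBetween_inr_inl] at h
  have halt := alternating_of_mem_union hM hM₁ hleft hright injβ injσ (hβ0 ▸ hσ0 ▸ hij)
  refine ⟨β, σ, hβ0, hσ0, fun u => (halt u).1, fun u => (halt u).2, injβ, injσ, ?_, ?_⟩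
  · rintro u rfl ⟨x, y⟩ hq (hx : x = β u)
    subst hx
    obtain ⟨v, rfl⟩ : ∃ v, u = v + 1 := Nat.exists_eq_succ_of_ne_zero (by omega)
    have h := hd.leaf (.inr y) (by
      rw [hβ _ le_rfl, edgeBetween_inl_inr]
      exact Finset.mem_union_left _ hq)
    rw [show 2 * (v + 1) - 1 = 2 * v + 1 by omega, hσ v (by omega)] at h
    have := injβ (show 2 * (v + 1) ≤ 2 * (v + 1) from le_rfl) (show 2 * v ≤ 2 * (v + 1) by omega)
      (Prod.mk.inj (hM.eq_of_sharesVertex hq ((halt v).1 (by omega))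
        (Or.inr (Sum.inr_injective h)))).1
    omega
  · rintro u rfl ⟨x, y⟩ hq (hy : y = σ u)
    subst hy
    obtain ⟨v, rfl⟩ : ∃ v, u = v + 1 := Nat.exists_eq_succ_of_ne_zero (by omega)
    have h := hd.leaf (.inl x) (by
      rw [hσ _ le_rfl, edgeBetween_inr_inl]
      exact Finset.mem_union_right _ hq)
    rw [show 2 * (v + 1) + 1 - 1 = 2 * (v + 1) by omega, hβ (v + 1) (by omega)] at h
    have := injσ (show 2 * (v + 1) + 1 ≤ 2 * (v + 1) + 1 from le_rfl)
      (show 2 * v + 1 ≤ 2 * (v + 1) + 1 by omega)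
      (Prod.mk.inj (hM₁.eq_of_sharesVertex hq ((halt v).2 (by omega))
        (Or.inl (Sum.inl_injective h)))).2
    omega

end HalfPath

section HalfPathEdges

variable {B S : Type*} [DecidableEq B] [DecidableEq S] {E : B → S → Prop}
  {M M₁ : Finset (B × S)} {β : ℕ → B} {σ : ℕ → S} {n : ℕ}

def leftEdges (β : ℕ → B) (σ : ℕ → S) (n : ℕ) : Finset (B × S) :=
  (Finset.range ((n + 1) / 2)).image fun u => (β u, σ u)

def rightEdges (β : ℕ → B) (σ : ℕ → S) (n : ℕ) : Finset (B × S) :=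
  (Finset.range (n / 2)).image fun u => (β (u + 1), σ u)

theorem mem_leftEdges {q : B × S} :
    q ∈ leftEdges β σ n ↔ ∃ u, 2 * u + 1 ≤ n ∧ (β u, σ u) = q := by
  simp only [leftEdges, Finset.mem_image, Finset.mem_range]
  exact exists_congr fun u => and_congr_left' (by omega)

theorem mem_rightEdges {q : B × S} :
    q ∈ rightEdges β σ n ↔ ∃ u, 2 * u + 2 ≤ n ∧ (β (u + 1), σ u) = q := by
  simp only [rightEdges, Finset.mem_image, Finset.mem_range]
  exact exists_congr fun u => and_congr_left' (by omega)

theorem exists_mem_rightEdges_fst_eq :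
    ∀ x ∈ (leftEdges β σ n).erase (β 0, σ 0), ∃ y ∈ rightEdges β σ n, y.1 = x.1 := by
  intro x hx
  obtain ⟨hx0, hx⟩ := Finset.mem_erase.1 hx
  obtain ⟨u, hu, rfl⟩ := mem_leftEdges.1 hx
  obtain ⟨v, rfl⟩ : ∃ v, u = v + 1 :=
    Nat.exists_eq_succ_of_ne_zero (by rintro rfl; exact hx0 rfl)
  exact ⟨_, mem_rightEdges.2 ⟨v, by omega, rfl⟩, rfl⟩

namespace IsAltHalfPath

variable (hP : IsAltHalfPath M M₁ β σ n)
include hP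

theorem leftEdges_subset : leftEdges β σ n ⊆ M := fun _ hq => by
  obtain ⟨u, hu, rfl⟩ := mem_leftEdges.1 hq
  exact hP.mem_left u hu

theorem rightEdges_subset : rightEdges β σ n ⊆ M₁ := fun _ hq => by
  obtain ⟨u, hu, rfl⟩ := mem_rightEdges.1 hq
  exact hP.mem_right u hu

theorem mem_leftEdges_of_sharesVertex (hM : IsBipMatching E M) :
    ∀ q ∈ M, ∀ y ∈ rightEdges β σ n, SharesVertex q y → q ∈ leftEdges β σ n := by
  intro q hq y hy hqy
  obtain ⟨u, hu, rfl⟩ := mem_rightEdges.1 hy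
  rcases hqy with h | h
  · by_cases hu' : 2 * (u + 1) + 1 ≤ n
    · rw [hM.eq_of_sharesVertex hq (hP.mem_left (u + 1) hu') (Or.inl h)]
      exact mem_leftEdges.2 ⟨u + 1, hu', rfl⟩
    · exact absurd h (hP.end_buyer (u + 1) (by omega) q hq)
  · rw [hM.eq_of_sharesVertex hq (hP.mem_left u (by omega)) (Or.inr h)]
    exact mem_leftEdges.2 ⟨u, by omega, rfl⟩

theorem mem_rightEdges_of_sharesVertex (hM₁ : IsBipMatching E M₁) :
    ∀ q ∈ M₁, ∀ x ∈ (leftEdges β σ n).erase (β 0, σ 0), SharesVertex q x →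
      q ∈ rightEdges β σ n := by
  intro q hq x hx hqx
  obtain ⟨hx0, hx⟩ := Finset.mem_erase.1 hx
  obtain ⟨u, hu, rfl⟩ := mem_leftEdges.1 hx
  obtain ⟨v, rfl⟩ : ∃ v, u = v + 1 :=
    Nat.exists_eq_succ_of_ne_zero (by rintro rfl; exact hx0 rfl)
  rcases hqx with h | h
  · rw [hM₁.eq_of_sharesVertex hq (hP.mem_right v (by omega)) (Or.inl h)]
    exact mem_rightEdges.2 ⟨v, by omega, rfl⟩
  · by_cases hv : 2 * (v + 1) + 2 ≤ n
    · rw [hM₁.eq_of_sharesVertex hq (hP.mem_right (v + 1) hv) (Or.inr h)]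
      exact mem_rightEdges.2 ⟨v + 1, hv, rfl⟩
    · exact absurd h (hP.end_seller (v + 1) (by omega) q hq)

theorem fst_ne_of_mem_rightEdges : ∀ y ∈ rightEdges β σ n, y.1 ≠ β 0 := by
  intro y hy h
  obtain ⟨u, hu, rfl⟩ := mem_rightEdges.1 hy
  have := hP.injOn_buyer (show 2 * (u + 1) ≤ n by omega) (show 2 * 0 ≤ n by omega) h
  omega

theorem not_rightEdges_subset_erase (hM : IsBipMatching E M) (hn : 2 ≤ n) :
    ¬rightEdges β σ n ⊆ (leftEdges β σ n).erase (β 0, σ 0) := fun h => by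
  obtain ⟨hne, hx⟩ := Finset.mem_erase.1 (h (mem_rightEdges.2 ⟨0, hn, rfl⟩))
  exact hne (hM.eq_of_sharesVertex (hP.leftEdges_subset hx) (hP.mem_left 0 (by omega))
    (Or.inr rfl))

end IsAltHalfPath

end HalfPathEdges

theorem exists_isAltHalfPath_of_interior {B S : Type*} [DecidableEq B] [DecidableEq S]
    {E : B → S → Prop} {M M₁ : Finset (B × S)} (hM : IsBipMatching E M)
    (hM₁ : IsBipMatching E M₁) {k : ℕ} {c : ℕ → B ⊕ S}
    (hinj : ∀ a a', a ≤ k → a' ≤ k → c a = c a' → a = a')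
    (hpath : ∀ a < k, EdgeBetween (M ∪ M₁) (c a) (c (a + 1)))
    (hmax0 : ∀ v, EdgeBetween (M ∪ M₁) (c 0) v → v = c 1)
    (hmaxk : ∀ v, EdgeBetween (M ∪ M₁) (c k) v → v = c (k - 1))
    {l : ℕ} (hl : 0 < l) (hlk : l < k) {i : B} {j : S} (hcl : c l = .inr j) (hij : (i, j) ∈ M) :
    ∃ n β σ, 2 ≤ n ∧ β 0 = i ∧ σ 0 = j ∧ IsAltHalfPath M M₁ β σ n := by
  rcases partner_adjacent_of_interior hM hM₁ hinj hpath hl hlk hcl hij with h | h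
  · have hd := isPathToLeaf_reverse hinj hpath hmax0 (a := l + 1) (by omega) (by omega)
    obtain ⟨β, σ, hβ0, hσ0, hP⟩ :=
      hd.exists_isAltHalfPath hM hM₁ (by omega) (by simpa using h) (by simpa using hcl) hij
    exact ⟨l + 1, β, σ, by omega, hβ0, hσ0, hP⟩
  · have hd := isPathToLeaf_shift hinj hpath hmaxk (a := l - 1) (by omega)
    obtain ⟨β, σ, hβ0, hσ0, hP⟩ := hd.exists_isAltHalfPath hM hM₁ (by omega) (by simpa using h)
      (by simpa [Nat.sub_add_cancel hl] using hcl) hij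
    exact ⟨k - (l - 1), β, σ, by omega, hβ0, hσ0, hP⟩

theorem internal_seller_stays_matched_general
    {B S : Type*} [DecidableEq B] [DecidableEq S]
    (E : B → S → Prop) (b : B → ℝ) (s : S → ℝ) (φ : B → ℝ)
    (hφ : ∀ i, φ i ≤ b i)
    (M M₁ : Finset (B × S))
    (hM : IsBipMatching E M) (hM₁ : IsBipMatching E M₁)
    (hMmax : ∀ N, IsBipMatching E N →
      bipNodeWeight (Sum.elim b fun j => -s j) N ≤ bipNodeWeight (Sum.elim b fun j => -s j) M)
    (hM₁max : ∀ N, IsBipMatching E N →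
      bipNodeWeight (Sum.elim φ fun j => -s j) N ≤ bipNodeWeight (Sum.elim φ fun j => -s j) M₁)
    (hM₁uniq : ∀ N, IsBipMatching E N →
      bipNodeWeight (Sum.elim φ fun j => -s j) N = bipNodeWeight (Sum.elim φ fun j => -s j) M₁ →
      N = M₁)
    (Mminus : B → Finset (B × S))
    (hMm : ∀ i, IsBipMatching E (Mminus i))
    (hMmfree : ∀ i, ∀ p ∈ Mminus i, p.1 ≠ i)
    (hMmmax : ∀ i, ∀ N, IsBipMatching E N → (∀ p ∈ N, p.1 ≠ i) →
      bipNodeWeight (Sum.elim b fun j => -s j) N ≤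
        bipNodeWeight (Sum.elim b fun j => -s j) (Mminus i))
    (hMmuniq : ∀ i, ∀ N, IsBipMatching E N → (∀ p ∈ N, p.1 ≠ i) →
      bipNodeWeight (Sum.elim b fun j => -s j) N =
        bipNodeWeight (Sum.elim b fun j => -s j) (Mminus i) → N = Mminus i)
    (k : ℕ) (c : ℕ → B ⊕ S)
    (hinj : ∀ l l', l ≤ k → l' ≤ k → c l = c l' → l = l')
    (hpath : ∀ l < k, EdgeBetween (M ∪ M₁) (c l) (c (l + 1)))
    (hmax0 : ∀ v, EdgeBetween (M ∪ M₁) (c 0) v → v = c 1)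
    (hmaxk : ∀ v, EdgeBetween (M ∪ M₁) (c k) v → v = c (k - 1))
    (j : S) (hjon : ∃ l, 0 < l ∧ l < k ∧ c l = Sum.inr j)
    (i : B) (hij : (i, j) ∈ M) :
    ∃ p ∈ Mminus i, p.2 = j := by
  by_contra! hj
  obtain ⟨l, hl, hlk, hcl⟩ := hjon
  obtain ⟨n, β, σ, hn, rfl, rfl, hP⟩ :=
    exists_isAltHalfPath_of_interior hM hM₁ hinj hpath hmax0 hmaxk hl hlk hcl hij
  have hX := hP.leftEdges_subset
  have hX' := (Finset.erase_subset (β 0, σ 0) _).trans hX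
  have hY := hP.rightEdges_subset
  have hgain := bipNodeWeight_lt_erase_of_exchange hM hMmax (hMm _) (hMmfree _) (hMmmax _)
    (hMmuniq _) hj (hM₁.mono hY) hX (mem_leftEdges.2 ⟨0, by omega, rfl⟩)
    (hP.mem_leftEdges_of_sharesVertex hM) hP.fst_ne_of_mem_rightEdges
    ⟨_, mem_rightEdges.2 ⟨0, hn, rfl⟩, rfl⟩
  have hloss := bipNodeWeight_lt_of_exchange hM₁ hM₁max hM₁uniq (hM.mono hX') hY
    (hP.mem_rightEdges_of_sharesVertex hM₁) (hP.not_rightEdges_subset_erase hM hn)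
  have hsurplus := sum_fst_le_sum_fst (g := fun x => b x - φ x) (fun x => sub_nonneg.2 (hφ x))
    (hM.mono hX').injOn_fst (hM₁.mono hY).injOn_fst exists_mem_rightEdges_fst_eq
  simp only [bipNodeWeight_elim, Finset.sum_sub_distrib] at hgain hloss hsurplus
  linarith

/-- **Internal sellers of alternating paths remain matched after removing their partner.**
With node weights `W i = b i`, `W j = -s j` and `W₁ i = φ i` (where `φ i ≤ b i`),
`W₁ j = -s j`, let `M` be the unique maximum node-based-weight matching w.r.t. `W`, `M₁` the
unique maximum node-based-weight matching w.r.t. `W₁`, and for every buyer `i` let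
`Mminus i` be the unique maximum-weight (w.r.t. `W`) matching among matchings leaving `i`
uncovered. If `A = (c 0, ..., c k)` is a maximal alternating path of `M ∪ M₁` that is not a
cycle, `j` is a seller on `A` that is not an endpoint of `A`, and `i` is the buyer with
`(i,j) ∈ M`, then `j` is covered by `Mminus i`. -/
theorem internal_seller_stays_matched
    {B S : Type*} [Fintype B] [Fintype S] [DecidableEq B] [DecidableEq S]
    (E : B → S → Prop) (b : B → ℝ) (s : S → ℝ) (φ : B → ℝ)
    (hφ : ∀ i, φ i ≤ b i)
    (M M₁ : Finset (B × S))
    (hM : IsBipMatching E M) (hM₁ : IsBipMatching E M₁)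
    (hMmax : ∀ N, IsBipMatching E N →
      bipNodeWeight (Sum.elim b fun j => -s j) N ≤ bipNodeWeight (Sum.elim b fun j => -s j) M)
    (hMuniq : ∀ N, IsBipMatching E N →
      bipNodeWeight (Sum.elim b fun j => -s j) N = bipNodeWeight (Sum.elim b fun j => -s j) M →
      N = M)
    (hM₁max : ∀ N, IsBipMatching E N →
      bipNodeWeight (Sum.elim φ fun j => -s j) N ≤ bipNodeWeight (Sum.elim φ fun j => -s j) M₁)
    (hM₁uniq : ∀ N, IsBipMatching E N →
      bipNodeWeight (Sum.elim φ fun j => -s j) N = bipNodeWeight (Sum.elim φ fun j => -s j) M₁ →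
      N = M₁)
    (Mminus : B → Finset (B × S))
    (hMm : ∀ i, IsBipMatching E (Mminus i))
    (hMmfree : ∀ i, ∀ p ∈ Mminus i, p.1 ≠ i)
    (hMmmax : ∀ i, ∀ N, IsBipMatching E N → (∀ p ∈ N, p.1 ≠ i) →
      bipNodeWeight (Sum.elim b fun j => -s j) N ≤
        bipNodeWeight (Sum.elim b fun j => -s j) (Mminus i))
    (hMmuniq : ∀ i, ∀ N, IsBipMatching E N → (∀ p ∈ N, p.1 ≠ i) →
      bipNodeWeight (Sum.elim b fun j => -s j) N =
        bipNodeWeight (Sum.elim b fun j => -s j) (Mminus i) → N = Mminus i)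
    (k : ℕ) (hk : 1 ≤ k) (c : ℕ → B ⊕ S)
    (hinj : ∀ l l', l ≤ k → l' ≤ k → c l = c l' → l = l')
    (hpath : ∀ l < k, EdgeBetween (M ∪ M₁) (c l) (c (l + 1)))
    (hmax0 : ∀ v, EdgeBetween (M ∪ M₁) (c 0) v → v = c 1)
    (hmaxk : ∀ v, EdgeBetween (M ∪ M₁) (c k) v → v = c (k - 1))
    (j : S) (hjon : ∃ l, 0 < l ∧ l < k ∧ c l = Sum.inr j)
    (i : B) (hij : (i, j) ∈ M) :
    ∃ p ∈ Mminus i, p.2 = j :=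
  internal_seller_stays_matched_general E b s φ hφ M M₁ hM hM₁ hMmax hM₁max hM₁uniq Mminus hMm
    hMmfree hMmmax hMmuniq k c hinj hpath hmax0 hmaxk j hjon i hij
end

section
/- Prices offered in the constrained posted-price mechanisms stay within the constraints: let μ be a Borel probability measure on ℝ, and let b̄, s̄, s ∈ ℝ with b̄ ≤ s̄ and μ([b̄, ∞)) = 1. Then every p ∈ (−∞, s̄] that maximizes the seller's expected utility q ↦ (q − s)·μ([q, ∞)) over q ∈ (−∞, s̄] satisfies p ≥ b̄. Symmetrically, if ν is a Borel probability measure on ℝ with ν((−∞, s̄]) = 1, b̄ ≤ s̄, and b ∈ ℝ, then every p ∈ [b̄, ∞) that maximizes the buyer's expected utility q ↦ (b − q)·ν((−∞, q]) over q ∈ [b̄, ∞) satisfies p ≤ s̄. -/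
open MeasureTheory

/-- **Prices offered in the constrained posted-price mechanisms stay within the constraints.**
Let `μ` be a Borel probability measure on `ℝ` with `μ([bbar, ∞)) = 1` and `bbar ≤ sbar`. Then
every `p ≤ sbar` maximizing the seller's expected utility `q ↦ (q - s) · μ([q, ∞))` over
`q ≤ sbar` satisfies `p ≥ bbar`. Symmetrically, if `ν` is a Borel probability measure on `ℝ`
with `ν((-∞, sbar]) = 1` and `bbar ≤ sbar`, then every `p ≥ bbar` maximizing the buyer's
expected utility `q ↦ (b - q) · ν((-∞, q])` over `q ≥ bbar` satisfies `p ≤ sbar`. -/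
theorem constrained_offer_price_within_constraints
    (μ ν : Measure ℝ) [IsProbabilityMeasure μ] [IsProbabilityMeasure ν]
    (bbar sbar s b : ℝ) (hbs : bbar ≤ sbar) :
    (μ (Set.Ici bbar) = 1 →
      ∀ p ∈ Set.Iic sbar,
        (∀ q ∈ Set.Iic sbar,
          (q - s) * (μ (Set.Ici q)).toReal ≤ (p - s) * (μ (Set.Ici p)).toReal) →
        bbar ≤ p) ∧
    (ν (Set.Iic sbar) = 1 →
      ∀ p ∈ Set.Ici bbar,
        (∀ q ∈ Set.Ici bbar,
          (b - q) * (ν (Set.Iic q)).toReal ≤ (b - p) * (ν (Set.Iic p)).toReal) →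
        p ≤ sbar) := by
  constructor
  · intro hμ p hp hmax
    by_contra h
    push_neg at h
    have hpμ : μ (Set.Ici p) = 1 := by
      refine le_antisymm prob_le_one ?_
      rw [← hμ]
      exact measure_mono (Set.Ici_subset_Ici.mpr h.le)
    have := hmax bbar hbs
    rw [hpμ, hμ] at this
    simp only [measure_univ, ENNReal.toReal_one, mul_one] at this
    linarith
  · intro hν p hp hmax
    by_contra h
    push_neg at h
    have hpν : ν (Set.Iic p) = 1 := by
      refine le_antisymm prob_le_one ?_
      rw [← hν]
      exact measure_mono (Set.Iic_subset_Iic.mpr h.le)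
    have := hmax sbar hbs
    rw [hpν, hν] at this
    simp only [ENNReal.toReal_one, mul_one] at this
    linarith
end
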